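/- arXiv:1706.01627 — 6 statements merged into one kernel-verified Lean document; each statement's English description precedes it below -/
import Mathlib

section
/- Let X be a Z²-subshift of finite type which is f-block gluing for a nondecreasing function f : ℕ → ℕ satisfying f(n) ∈ o(log n) (for every ε > 0 there is n₀ such that f(n) ≤ ε·log n for all n ≥ n₀) and f(n) ≤ n for all n. Then the set of doubly periodic configurations of X is dense in X. -/
open Filter

abbrev Config (A : Type*) := ℤ × ℤ → A

def shiftC {A : Type*} (u : ℤ × ℤ) (x : Config A) : Config A := fun v => x (v + u)

def blockAt {A : Type*} (x : Config A) (u : ℤ × ℤ) (n : ℕ) : Fin n × Fin n → A :=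
  fun v => x (u + (((v.1 : ℕ) : ℤ), ((v.2 : ℕ) : ℤ)))

def IsSFT {A : Type*} (X : Set (Config A)) : Prop :=
  ∃ (r : ℕ) (F : Set (Fin r × Fin r → A)),
    X = {x : Config A | ∀ u : ℤ × ℤ, blockAt x u r ∉ F}

def Lang {A : Type*} (X : Set (Config A)) (n : ℕ) : Set (Fin n × Fin n → A) :=
  {p | ∃ x ∈ X, ∃ u : ℤ × ℤ, blockAt x u n = p}

def gluingSet {A : Type*} (X : Set (Config A)) {n : ℕ}
    (p q : Fin n × Fin n → A) : Set (ℤ × ℤ) :=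
  {u | ∃ x ∈ X, blockAt x 0 n = q ∧ blockAt x u n = p}

def normInf (u : ℤ × ℤ) : ℤ := max |u.1| |u.2|

def BlockGluing {A : Type*} (X : Set (Config A)) (f : ℕ → ℕ) : Prop :=
  ∀ n : ℕ, 1 ≤ n → ∀ p ∈ Lang X n, ∀ q ∈ Lang X n, ∀ u : ℤ × ℤ,
    (f n : ℤ) + (n : ℤ) ≤ normInf u → u ∈ gluingSet X p q

def DoublyPeriodic {A : Type*} (x : Config A) : Prop :=
  ∃ m : ℤ, 0 < m ∧ ∃ k : ℤ, 0 < k ∧ shiftC (m, 0) x = x ∧ shiftC (0, k) x = x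

/-!
Let `p` be the `M`-block of `x ∈ X` at the origin. Gluing a block to a copy of itself at
horizontal distance `f m + m` doubles the number of copies of `p` in a row while at most tripling
the row's width, so after `K` steps there are `2 ^ K` separated copies of `p` in a row of width
`W ≤ 3 ^ K * M`. Gluing this row below a copy of itself at vertical distance `f W + W` leaves a
strip of height `f W` between every copy and the copy above it. As `f W = o(log W)`, there are
fewer than `2 ^ K` fillings of an `r × f W` piece of that strip (`r` the window of the SFT), so
two copies `τ < τ'` see the same filling. Then the rectangle `[τ, τ') × [0, M + f W)` has matching opposite borders
of width `r`, and repeating it periodically gives a doubly periodic point of `X` containing `p`.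
-/

section ToIcoMod

variable {α : Type*} [AddCommGroup α] [LinearOrder α] [IsOrderedAddMonoid α] [Archimedean α]
  {p : α} (hp : 0 < p)

lemma toIcoMod_toIcoMod_add (a b c : α) :
    toIcoMod hp a (toIcoMod hp a b + c) = toIcoMod hp a (b + c) :=
  (toIcoMod_eq_toIcoMod hp).2 ⟨toIcoDiv hp a b, by rw [← self_sub_toIcoMod hp a b]; abel⟩

lemma apply_toIcoMod_of_periodicOn {β : Type*} {g : α → β} {a r : α} (hr : r ≤ p)
    (hg : ∀ s, a ≤ s → s < a + r → g (s + p) = g s) {s : α} (hs : a ≤ s) (hs' : s < a + p + r) :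
    g (toIcoMod hp a s) = g s := by
  rcases lt_or_ge s (a + p) with h | h
  · rw [(toIcoMod_eq_self hp).2 ⟨hs, h⟩]
  · have h₁ : a ≤ s - p := le_sub_iff_add_le.2 h
    have h₂ : s - p < a + r := sub_lt_iff_lt_add.2 (by rwa [add_right_comm])
    have h₃ : s - p < a + p := h₂.trans_le (by gcongr)
    rw [← toIcoMod_sub, (toIcoMod_eq_self hp).2 ⟨h₁, h₃⟩, ← hg _ h₁ h₂, sub_add_cancel]

end ToIcoMod

lemma Finset.exists_lt_map_eq_of_card_lt {α β : Type*} [LinearOrder α] [Fintype β]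
    {s : Finset α} (g : α → β) (h : Fintype.card β < s.card) :
    ∃ a ∈ s, ∃ b ∈ s, a < b ∧ g a = g b := by
  obtain ⟨a, ha, b, hb, hne, hab⟩ :=
    Finset.exists_ne_map_eq_of_card_lt_of_maps_to (t := Finset.univ) (by simpa) (f := g) (by simp)
  rcases hne.lt_or_gt with hlt | hlt
  · exact ⟨a, ha, b, hb, hlt, hab⟩
  · exact ⟨b, hb, a, ha, hlt, hab.symm⟩

lemma pow_lt_pow_of_mul_log_lt {a b m n : ℕ} (ha : 0 < a) (hb : 0 < b)
    (h : m * Real.log a < n * Real.log b) : a ^ m < b ^ n := by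
  have : ((a ^ m : ℕ) : ℝ) < (b ^ n : ℕ) := by
    rw [← Real.log_lt_log_iff (by positivity) (by positivity)]
    push_cast
    rwa [Real.log_pow, Real.log_pow]
  exact_mod_cast this

lemma exists_pow_lt_two_pow_of_le_mul_log {f : ℕ → ℕ}
    (hlog : ∀ ε : ℝ, 0 < ε → ∃ n₀ : ℕ, ∀ n : ℕ, n₀ ≤ n → (f n : ℝ) ≤ ε * Real.log n)
    {a : ℕ} (ha : 0 < a) (r M₀ : ℕ) :
    ∃ M, M₀ ≤ M ∧ ∃ K : ℕ, ∀ W : ℕ, M ≤ W → W ≤ M * 3 ^ K → a ^ (r * f W) < 2 ^ K := by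
  set c : ℝ := r * Real.log a
  have hc : 0 ≤ c := mul_nonneg (Nat.cast_nonneg _) (Real.log_nonneg (by exact_mod_cast ha))
  have hlog3 : 0 < Real.log 3 := Real.log_pos (by norm_num)
  set ε := Real.log 2 / ((c + 1) * (1 + Real.log 3))
  obtain ⟨n₀, hn₀⟩ := hlog ε (by positivity)
  set M := max M₀ (max n₀ 1)
  set K := ⌈Real.log M⌉₊ + 1
  have hM : 1 ≤ M := le_max_of_le_right (le_max_right _ _)
  have hK : (0 : ℝ) < K := Nat.cast_pos.2 (Nat.succ_pos _)
  refine ⟨M, le_max_left _ _, K, fun W hMW hW => pow_lt_pow_of_mul_log_lt ha two_pos ?_⟩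
  have hlogW : Real.log W < K * (1 + Real.log 3) := calc
    Real.log W ≤ Real.log (M * 3 ^ K) :=
        Real.log_le_log (by norm_cast; omega) (by exact_mod_cast hW)
    _ = Real.log M + K * Real.log 3 := by
        rw [Real.log_mul (by norm_cast; omega) (by positivity), Real.log_pow]
    _ < K + K * Real.log 3 := by
        gcongr
        exact (Nat.le_ceil _).trans_lt (by simp only [K, Nat.cast_add, Nat.cast_one]; linarith)
    _ = K * (1 + Real.log 3) := by ring
  calc ((r * f W : ℕ) : ℝ) * Real.log a = c * f W := by push_cast; ring
    _ ≤ c * (ε * Real.log W) := by gcongr; exact hn₀ W (by omega)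
    _ ≤ c * (ε * (K * (1 + Real.log 3))) := by gcongr
    _ = K * Real.log 2 * (c / (c + 1)) := by simp only [ε]; field_simp
    _ < K * Real.log 2 :=
        mul_lt_of_lt_one_right (by positivity) ((div_lt_one (by positivity)).2 (by linarith))

section Blocks

variable {A : Type*}

lemma apply_add_eq_of_blockAt_eq {x y : Config A} {u v : ℤ × ℤ} {n : ℕ}
    (h : blockAt x u n = blockAt y v n) {w : ℤ × ℤ} (hw₁ : 0 ≤ w.1) (hw₁' : w.1 < n)
    (hw₂ : 0 ≤ w.2) (hw₂' : w.2 < n) : x (u + w) = y (v + w) := by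
  obtain ⟨i, j⟩ := w
  lift i to ℕ using hw₁
  lift j to ℕ using hw₂
  exact congrFun h (⟨i, by dsimp only at hw₁'; omega⟩, ⟨j, by dsimp only at hw₂'; omega⟩)

lemma apply_eq_of_blockAt_eq {x y : Config A} {u₁ u₂ v₁ v₂ : ℤ} {n : ℕ}
    (h : blockAt x (u₁, u₂) n = blockAt y (v₁, v₂) n) {s t s' t' : ℤ} (hs : u₁ ≤ s)
    (hs' : s < u₁ + n) (ht : u₂ ≤ t) (ht' : t < u₂ + n) (hss' : s - u₁ = s' - v₁)
    (htt' : t - u₂ = t' - v₂) : x (s, t) = y (s', t') := by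
  have := apply_add_eq_of_blockAt_eq h (w := (s - u₁, t - u₂)) (by dsimp only; omega)
    (by dsimp only; omega) (by dsimp only; omega) (by dsimp only; omega)
  rwa [Prod.mk_add_mk, Prod.mk_add_mk, add_sub_cancel, add_sub_cancel, hss', htt', add_sub_cancel,
    add_sub_cancel] at this

lemma blockAt_add_eq_of_blockAt_eq {x y : Config A} {u v : ℤ × ℤ} {m n : ℕ}
    (h : blockAt x u m = blockAt y v m) {w : ℤ × ℤ} (hw₁ : 0 ≤ w.1) (hw₁' : w.1 + n ≤ m)
    (hw₂ : 0 ≤ w.2) (hw₂' : w.2 + n ≤ m) : blockAt x (u + w) n = blockAt y (v + w) n := by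
  funext c
  have := c.1.isLt
  have := c.2.isLt
  simp only [blockAt, add_assoc]
  exact apply_add_eq_of_blockAt_eq h (by simp only [Prod.fst_add]; omega)
    (by simp only [Prod.fst_add]; omega) (by simp only [Prod.snd_add]; omega)
    (by simp only [Prod.snd_add]; omega)

lemma blockAt_shiftC (w u : ℤ × ℤ) (z : Config A) (n : ℕ) :
    blockAt (shiftC w z) u n = blockAt z (u + w) n := by
  funext c
  simp only [blockAt, shiftC, add_right_comm]

lemma shiftC_comm (u w : ℤ × ℤ) (z : Config A) :
    shiftC u (shiftC w z) = shiftC w (shiftC u z) := by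
  funext v
  simp only [shiftC, add_right_comm]

lemma DoublyPeriodic.shiftC {z : Config A} (h : DoublyPeriodic z) (w : ℤ × ℤ) :
    DoublyPeriodic (shiftC w z) := by
  obtain ⟨m, hm, k, hk, h₁, h₂⟩ := h
  exact ⟨m, hm, k, hk, by rw [shiftC_comm, h₁], by rw [shiftC_comm, h₂]⟩

end Blocks

section SFT

variable {A : Type*} {X : Set (Config A)} {r : ℕ} {F : Set (Fin r × Fin r → A)}

lemma mem_of_forall_blockAt_eq (hF : X = {x | ∀ u, blockAt x u r ∉ F}) {y z : Config A}
    (hz : z ∈ X) (h : ∀ u, ∃ w, blockAt y u r = blockAt z w r) : y ∈ X := by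
  subst hF
  intro u
  obtain ⟨w, hw⟩ := h u
  exact hw ▸ hz w

lemma shiftC_mem (hF : X = {x | ∀ u, blockAt x u r ∉ F}) {z : Config A} (hz : z ∈ X)
    (w : ℤ × ℤ) : shiftC w z ∈ X :=
  mem_of_forall_blockAt_eq hF hz fun u => ⟨u + w, blockAt_shiftC w u z r⟩

end SFT

section Periodize

variable {A : Type*} {T₁ T₂ : ℤ} (h₁ : 0 < T₁) (h₂ : 0 < T₂) (a b : ℤ)

noncomputable def periodize (z : Config A) : Config A :=
  fun v => z (toIcoMod h₁ a v.1, toIcoMod h₂ b v.2)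

lemma periodize_doublyPeriodic (z : Config A) : DoublyPeriodic (periodize h₁ h₂ a b z) :=
  ⟨T₁, h₁, T₂, h₂, by funext v; simp [periodize, shiftC], by funext v; simp [periodize, shiftC]⟩

lemma blockAt_periodize {z : Config A} {u : ℤ × ℤ} {n : ℕ} (hu₁ : a ≤ u.1)
    (hu₁' : u.1 + n ≤ a + T₁) (hu₂ : b ≤ u.2) (hu₂' : u.2 + n ≤ b + T₂) :
    blockAt (periodize h₁ h₂ a b z) u n = blockAt z u n := by
  funext c
  have := c.1.isLt
  have := c.2.isLt
  simp only [blockAt, periodize, Prod.fst_add, Prod.snd_add]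
  rw [(toIcoMod_eq_self h₁).2 ⟨by omega, by omega⟩, (toIcoMod_eq_self h₂).2 ⟨by omega, by omega⟩]
  rfl

variable {a b} {z : Config A} {r : ℕ}

lemma periodize_apply_of_seams (hr₁ : r ≤ T₁) (hr₂ : r ≤ T₂)
    (hH : ∀ s t, a ≤ s → s < a + r → b ≤ t → t < b + T₂ + r → z (s + T₁, t) = z (s, t))
    (hV : ∀ s t, a ≤ s → s < a + T₁ → b ≤ t → t < b + r → z (s, t + T₂) = z (s, t))
    {s t : ℤ} (hs : a ≤ s) (hs' : s < a + T₁ + r) (ht : b ≤ t) (ht' : t < b + T₂ + r) :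
    periodize h₁ h₂ a b z (s, t) = z (s, t) := by
  have hs₀ := (toIcoMod_mem_Ico h₁ a s).1
  have hs₀' := (toIcoMod_mem_Ico h₁ a s).2
  calc z (toIcoMod h₁ a s, toIcoMod h₂ b t)
      = z (toIcoMod h₁ a s, t) :=
        apply_toIcoMod_of_periodicOn h₂ (g := fun t => z (toIcoMod h₁ a s, t)) hr₂
          (fun t ht ht' => hV _ t hs₀ hs₀' ht ht') ht ht'
    _ = z (s, t) :=
        apply_toIcoMod_of_periodicOn h₁ (g := fun s => z (s, t)) hr₁
          (fun s hs hs' => hH s t hs hs' ht ht') hs hs'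

lemma periodize_mem {X : Set (Config A)} {F : Set (Fin r × Fin r → A)}
    (hF : X = {x | ∀ u, blockAt x u r ∉ F}) (hz : z ∈ X) (hr₁ : r ≤ T₁) (hr₂ : r ≤ T₂)
    (hH : ∀ s t, a ≤ s → s < a + r → b ≤ t → t < b + T₂ + r → z (s + T₁, t) = z (s, t))
    (hV : ∀ s t, a ≤ s → s < a + T₁ → b ≤ t → t < b + r → z (s, t + T₂) = z (s, t)) :
    periodize h₁ h₂ a b z ∈ X := by
  refine mem_of_forall_blockAt_eq hF hz fun u => ⟨(toIcoMod h₁ a u.1, toIcoMod h₂ b u.2), ?_⟩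
  funext c
  have := c.1.isLt
  have := c.2.isLt
  obtain ⟨hu₁, hu₁'⟩ := toIcoMod_mem_Ico h₁ a u.1
  obtain ⟨hu₂, hu₂'⟩ := toIcoMod_mem_Ico h₂ b u.2
  simp only [blockAt, Prod.mk_add_mk]
  rw [← periodize_apply_of_seams h₁ h₂ hr₁ hr₂ hH hV (by omega) (by omega) (by omega) (by omega)]
  simp only [periodize, Prod.fst_add, Prod.snd_add, toIcoMod_toIcoMod_add]

end Periodize

section Gluing

variable {A : Type*} {X : Set (Config A)} {r : ℕ} {F : Set (Fin r × Fin r → A)} {f : ℕ → ℕ}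

lemma BlockGluing.exists_mem_blockAt_eq (hF : X = {x | ∀ u, blockAt x u r ∉ F})
    (hbg : BlockGluing X f) {n : ℕ} (hn : 1 ≤ n) {z₁ z₂ : Config A} (hz₁ : z₁ ∈ X)
    (hz₂ : z₂ ∈ X) (u₁ u₂ v d : ℤ × ℤ) (hd : (f n : ℤ) + n ≤ normInf d) :
    ∃ x ∈ X, blockAt x v n = blockAt z₁ u₁ n ∧ blockAt x (v + d) n = blockAt z₂ u₂ n := by
  obtain ⟨x, hx, h₀, hd⟩ := hbg n hn _ ⟨z₂, hz₂, u₂, rfl⟩ _ ⟨z₁, hz₁, u₁, rfl⟩ d hd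
  refine ⟨shiftC (-v) x, shiftC_mem hF hx _, ?_, ?_⟩
  · rw [blockAt_shiftC, add_neg_cancel, h₀]
  · rw [blockAt_shiftC, add_neg_cancel_comm, hd]

structure IsRowOfCopies (z : Config A) {M : ℕ} (p : Fin M × Fin M → A) (W : ℕ) (T : Finset ℤ) :
    Prop where
  nonneg : ∀ t ∈ T, 0 ≤ t
  add_le : ∀ t ∈ T, t + M ≤ W
  add_le_of_lt : ∀ t₁ ∈ T, ∀ t₂ ∈ T, t₁ < t₂ → t₁ + M ≤ t₂
  blockAt_eq : ∀ t ∈ T, blockAt z (t, 0) M = p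

lemma IsRowOfCopies.of_blockAt_eq {z z' : Config A} {M W : ℕ} {p : Fin M × Fin M → A}
    {T : Finset ℤ} (h : IsRowOfCopies z p W T) {j : ℤ} (hj : j ≤ 0) (hMj : M ≤ j + W)
    (h' : blockAt z' (0, j) W = blockAt z (0, j) W) : IsRowOfCopies z' p W T where
  nonneg := h.nonneg
  add_le := h.add_le
  add_le_of_lt := h.add_le_of_lt
  blockAt_eq t ht := by
    have := h.nonneg t ht
    have := h.add_le t ht
    have key := blockAt_add_eq_of_blockAt_eq h' (w := (t, -j)) (n := M) (by dsimp only; omega)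
      (by dsimp only; omega) (by dsimp only; omega) (by dsimp only; omega)
    simp only [Prod.mk_add_mk, zero_add, add_neg_cancel] at key
    rw [key, h.blockAt_eq t ht]

lemma IsRowOfCopies.union_shiftC {z : Config A} {M W W' d : ℕ} {p : Fin M × Fin M → A}
    {T T' : Finset ℤ} (h : IsRowOfCopies z p W T)
    (h' : IsRowOfCopies (shiftC ((d : ℤ), 0) z) p W' T') (hWd : W ≤ d) :
    IsRowOfCopies z p (d + W') (T ∪ T'.map (addRightEmbedding (d : ℤ))) where
  nonneg t ht := by
    rcases Finset.mem_union.1 ht with ht | ht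
    · exact h.nonneg t ht
    obtain ⟨s, hs, rfl⟩ := Finset.mem_map.1 ht
    have := h'.nonneg s hs
    simp only [addRightEmbedding_apply]
    omega
  add_le t ht := by
    rcases Finset.mem_union.1 ht with ht | ht
    · have := h.add_le t ht
      omega
    obtain ⟨s, hs, rfl⟩ := Finset.mem_map.1 ht
    have := h'.add_le s hs
    simp only [addRightEmbedding_apply]
    omega
  add_le_of_lt t₁ ht₁ t₂ ht₂ hlt := by
    simp only [Finset.mem_union, Finset.mem_map, addRightEmbedding_apply] at ht₁ ht₂
    rcases ht₁ with ht₁ | ⟨t₁, ht₁, rfl⟩ <;> rcases ht₂ with ht₂ | ⟨t₂, ht₂, rfl⟩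
    · exact h.add_le_of_lt t₁ ht₁ t₂ ht₂ hlt
    · have := h.add_le t₁ ht₁
      have := h'.nonneg t₂ ht₂
      omega
    · have := h.add_le t₂ ht₂
      have := h'.nonneg t₁ ht₁
      omega
    · have := h'.add_le_of_lt t₁ ht₁ t₂ ht₂ (by omega)
      omega
  blockAt_eq t ht := by
    rcases Finset.mem_union.1 ht with ht | ht
    · exact h.blockAt_eq t ht
    obtain ⟨s, hs, rfl⟩ := Finset.mem_map.1 ht
    rw [← h'.blockAt_eq s hs, blockAt_shiftC]
    rfl

lemma IsRowOfCopies.apply_add_sub_eq {z : Config A} {M W : ℕ} {p : Fin M × Fin M → A}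
    {T : Finset ℤ} (h : IsRowOfCopies z p W T) {t t' : ℤ} (ht : t ∈ T) (ht' : t' ∈ T) {s e : ℤ}
    (hs : t ≤ s) (hs' : s < t + M) (he : 0 ≤ e) (he' : e < M) :
    z (s + (t' - t), e) = z (s, e) :=
  apply_eq_of_blockAt_eq ((h.blockAt_eq t' ht').trans (h.blockAt_eq t ht).symm)
    (by omega) (by omega) (by omega) (by omega) (by omega) (by omega)

lemma BlockGluing.exists_rowOfCopies (hF : X = {x | ∀ u, blockAt x u r ∉ F})
    (hbg : BlockGluing X f) (hid : ∀ n, f n ≤ n) {z₀ : Config A} (hz₀ : z₀ ∈ X) {M : ℕ}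
    (hM : 1 ≤ M) (k : ℕ) :
    ∃ z ∈ X, ∃ (W : ℕ) (T : Finset ℤ), M ≤ W ∧ W ≤ M * 3 ^ k ∧ T.card = 2 ^ k ∧
      IsRowOfCopies z (blockAt z₀ 0 M) W T := by
  induction k with
  | zero => exact ⟨z₀, hz₀, M, {0}, le_rfl, by simp, rfl, by simp, by simp, by simp,
    fun t ht => by rw [Finset.mem_singleton.1 ht]; rfl⟩
  | succ k ih =>
    obtain ⟨z, hz, W, T, hMW, hW, hcard, hrow⟩ := ih
    obtain ⟨z', hz', hleft, hright⟩ := hbg.exists_mem_blockAt_eq hF (hM.trans hMW) hz hz 0 0 0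
      ((W + f W : ℕ), 0) (by simp only [normInf, abs_zero, Nat.abs_cast]; omega)
    have hright' : IsRowOfCopies (shiftC ((W + f W : ℕ), 0) z') (blockAt z₀ 0 M) W T :=
      hrow.of_blockAt_eq le_rfl (by simpa) <| by
        rw [blockAt_shiftC]
        simpa [Prod.mk_zero_zero] using hright
    refine ⟨z', hz', W + f W + W, _, by omega, ?_, ?_,
      (hrow.of_blockAt_eq le_rfl (by simpa) hleft).union_shiftC hright' (by omega)⟩
    · have := hid W
      rw [pow_succ]
      nlinarith
    · rw [Finset.card_union_of_disjoint, Finset.card_map, hcard, pow_succ, mul_two]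
      rw [Finset.disjoint_left]
      intro t ht ht'
      obtain ⟨s, hs, rfl⟩ := Finset.mem_map.1 ht'
      simp only [addRightEmbedding_apply] at ht
      have := hrow.add_le _ ht
      have := hrow.nonneg _ hs
      omega

lemma BlockGluing.exists_stacked_rowsOfCopies (hF : X = {x | ∀ u, blockAt x u r ∉ F})
    (hbg : BlockGluing X f) (hid : ∀ n, f n ≤ n) {z₀ : Config A} (hz₀ : z₀ ∈ X) {M : ℕ}
    (hM : 1 ≤ M) (K : ℕ) :
    ∃ z ∈ X, ∃ (W : ℕ) (T : Finset ℤ), M ≤ W ∧ W ≤ M * 3 ^ K ∧ T.card = 2 ^ K ∧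
      IsRowOfCopies z (blockAt z₀ 0 M) W T ∧
      ∀ s e : ℤ, 0 ≤ s → s < W → 0 ≤ e → e < M → z (s, e + (M + f W)) = z (s, e) := by
  obtain ⟨z, hz, W, T, hMW, hW, hcard, hrow⟩ := hbg.exists_rowOfCopies hF hid hz₀ hM K
  obtain ⟨x, hx, hbot, htop⟩ := hbg.exists_mem_blockAt_eq hF (hM.trans hMW) hz hz
    (0, M - W) 0 (0, M - W) (0, (W + f W : ℕ))
    (by simp only [normInf, abs_zero, Nat.abs_cast]; omega)
  simp only [Prod.mk_add_mk, add_zero, ← Prod.mk_zero_zero] at htop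
  refine ⟨x, hx, W, T, hMW, hW, hcard, hrow.of_blockAt_eq (by omega) (by omega) hbot,
    fun s e hs hs' he he' => ?_⟩
  calc x (s, e + (M + f W)) = z (s, e) :=
        apply_eq_of_blockAt_eq htop (by omega) (by omega) (by omega) (by omega) (by omega)
          (by omega)
    _ = x (s, e) :=
        (apply_eq_of_blockAt_eq hbot (by omega) (by omega) (by omega) (by omega) (by omega)
          (by omega)).symm

end Gluing

lemma exists_doublyPeriodic_blockAt_eq {A : Type*} [Fintype A] {X : Set (Config A)} {r : ℕ}
    {F : Set (Fin r × Fin r → A)} {f : ℕ → ℕ} (hF : X = {x | ∀ u, blockAt x u r ∉ F})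
    (hbg : BlockGluing X f) (hid : ∀ n, f n ≤ n) {x : Config A} (hx : x ∈ X) {M K : ℕ}
    (hM : 1 ≤ M) (hrM : r ≤ M)
    (hcount : ∀ W : ℕ, M ≤ W → W ≤ M * 3 ^ K → Fintype.card A ^ (r * f W) < 2 ^ K) :
    ∃ y ∈ X, DoublyPeriodic y ∧ blockAt y 0 M = blockAt x 0 M := by
  obtain ⟨z, hz, W, T, hMW, hW, hcard, hrow, hseam⟩ :=
    hbg.exists_stacked_rowsOfCopies hF hid hx hM K
  obtain ⟨τ, hτ, τ', hτ', hlt, hgap⟩ := T.exists_lt_map_eq_of_card_lt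
    (fun t (i : Fin r × Fin (f W)) => z (t + i.1, M + i.2))
    (by simpa [hcard] using hcount W hMW hW)
  have hτ₀ := hrow.nonneg τ hτ
  have hττ' := hrow.add_le_of_lt τ hτ τ' hτ' hlt
  have hτ'W := hrow.add_le τ' hτ'
  -- Columns `τ + i` and `τ' + i` agree on the copies of `p`, on the strip above them by the
  -- choice of `τ` and `τ'`, and above the strip by the vertical seam.
  have hH : ∀ s t : ℤ, τ ≤ s → s < τ + r → 0 ≤ t → t < 0 + (M + f W) + r →
      z (s + (τ' - τ), t) = z (s, t) := by
    intro s t hs hs' ht ht'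
    obtain ⟨i, rfl⟩ : ∃ i : ℕ, s = τ + i := ⟨(s - τ).toNat, by omega⟩
    rcases lt_or_ge t M with htM | htM
    · exact hrow.apply_add_sub_eq hτ hτ' hs (by omega) ht htM
    rcases lt_or_ge t (M + f W) with htg | htg
    · obtain ⟨j, rfl⟩ : ∃ j : ℕ, t = M + j := ⟨(t - M).toNat, by omega⟩
      rw [show τ + i + (τ' - τ) = τ' + i by ring]
      exact (congrFun hgap (⟨i, by omega⟩, ⟨j, by omega⟩)).symm
    obtain ⟨e, rfl⟩ : ∃ e, t = e + (M + f W) := ⟨t - (M + f W), by ring⟩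
    rw [hseam _ e (by omega) (by omega) (by omega) (by omega),
      hseam _ e (by omega) (by omega) (by omega) (by omega)]
    exact hrow.apply_add_sub_eq hτ hτ' hs (by omega) (by omega) (by omega)
  have hV : ∀ s t : ℤ, τ ≤ s → s < τ + (τ' - τ) → 0 ≤ t → t < 0 + r →
      z (s, t + (M + f W)) = z (s, t) :=
    fun s t _ _ ht _ => hseam s t (by omega) (by omega) ht (by omega)
  have h₁ : 0 < τ' - τ := by omega
  have h₂ : (0 : ℤ) < M + f W := by omega
  refine ⟨shiftC (τ, 0) (periodize h₁ h₂ τ 0 z),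
    shiftC_mem hF (periodize_mem h₁ h₂ hF hz (by omega) (by omega) hH hV) _,
    (periodize_doublyPeriodic h₁ h₂ τ 0 z).shiftC _, ?_⟩
  rw [blockAt_shiftC, zero_add, blockAt_periodize h₁ h₂ τ 0 le_rfl (by dsimp only; omega) le_rfl
    (by dsimp only; omega), hrow.blockAt_eq τ hτ]

lemma mem_closure_of_forall_exists_eq_of_normInf_le {A : Type*} [TopologicalSpace A]
    {S : Set (Config A)} {x : Config A}
    (h : ∀ L : ℕ, ∃ y ∈ S, ∀ v, normInf v ≤ L → y v = x v) : x ∈ closure S := by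
  rw [mem_closure_iff_nhds]
  intro U hU
  rw [nhds_pi, Filter.mem_pi] at hU
  obtain ⟨I, hI, V, hV, hVU⟩ := hU
  obtain ⟨L, hL⟩ := (hI.image normInf).bddAbove
  obtain ⟨y, hyS, hyx⟩ := h L.toNat
  refine ⟨y, hVU fun v hv => ?_, hyS⟩
  have := hL (Set.mem_image_of_mem normInf hv)
  rw [hyx v (by omega)]
  exact mem_of_mem_nhds (hV v)

lemma exists_doublyPeriodic_eq_of_normInf_le {A : Type*} [Fintype A] {X : Set (Config A)}
    {r : ℕ} {F : Set (Fin r × Fin r → A)} {f : ℕ → ℕ} (hF : X = {x | ∀ u, blockAt x u r ∉ F})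
    (hbg : BlockGluing X f) (hid : ∀ n, f n ≤ n)
    (hlog : ∀ ε : ℝ, 0 < ε → ∃ n₀ : ℕ, ∀ n : ℕ, n₀ ≤ n → (f n : ℝ) ≤ ε * Real.log n)
    {x : Config A} (hx : x ∈ X) (L : ℕ) :
    ∃ y ∈ X, DoublyPeriodic y ∧ ∀ v, normInf v ≤ L → y v = x v := by
  obtain ⟨M, hM, K, hcount⟩ :=
    exists_pow_lt_two_pow_of_le_mul_log hlog (Fintype.card_pos_iff.2 ⟨x 0⟩) r (max (2 * L + 1) r)
  obtain ⟨y, hy, hyp, hyx⟩ := exists_doublyPeriodic_blockAt_eq hF hbg hid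
    (shiftC_mem hF hx (-L, -L)) (by omega) (by omega) hcount
  refine ⟨shiftC (L, L) y, shiftC_mem hF hy _, hyp.shiftC _, fun ⟨v₁, v₂⟩ hv => ?_⟩
  simp only [normInf, max_le_iff, abs_le] at hv
  rw [← Prod.mk_zero_zero] at hyx
  have := apply_eq_of_blockAt_eq hyx (s := v₁ + L) (t := v₂ + L) (by omega) (by omega)
    (by omega) (by omega) rfl rfl
  simpa [shiftC] using this

theorem stmt1_general {A : Type} [Fintype A] [TopologicalSpace A]
    (X : Set (Config A)) (hX : IsSFT X)
    (f : ℕ → ℕ)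
    (hlog : ∀ ε : ℝ, 0 < ε → ∃ n₀ : ℕ, ∀ n : ℕ, n₀ ≤ n → (f n : ℝ) ≤ ε * Real.log n)
    (hid : ∀ n : ℕ, f n ≤ n)
    (hbg : BlockGluing X f) :
    X ⊆ closure {y : Config A | y ∈ X ∧ DoublyPeriodic y} := by
  obtain ⟨r, F, hF⟩ := hX
  intro x hx
  refine mem_closure_of_forall_exists_eq_of_normInf_le fun L => ?_
  obtain ⟨y, hy, hyp, hyx⟩ := exists_doublyPeriodic_eq_of_normInf_le hF hbg hid hlog hx L
  exact ⟨y, ⟨hy, hyp⟩, hyx⟩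

/-- An `f`-block gluing Z²-SFT with `f(n) ∈ o(log n)` and `f ≤ id` has a dense set of
doubly periodic configurations. -/
theorem stmt1 {A : Type} [Fintype A] [TopologicalSpace A] [DiscreteTopology A]
    (X : Set (Config A)) (hX : IsSFT X)
    (f : ℕ → ℕ) (hf : Monotone f)
    (hlog : ∀ ε : ℝ, 0 < ε → ∃ n₀ : ℕ, ∀ n : ℕ, n₀ ≤ n → (f n : ℝ) ≤ ε * Real.log n)
    (hid : ∀ n : ℕ, f n ≤ n)
    (hbg : BlockGluing X f) :
    X ⊆ closure {y : Config A | y ∈ X ∧ DoublyPeriodic y} :=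
  stmt1_general X hX f hlog hid hbg
end

section
/- A Z²-subshift X ⊆ A^{Z²} is linearly block gluing if and only if there exist a function f : ℕ → ℕ with f(n) ≤ C·n for all n (for some constant C > 0), an integer c ≥ 2 and m ∈ ℕ such that for every l ≥ 0, {u ∈ Z² : ‖u‖∞ ≥ f(c^l + m) + c^l + m} ⊆ Δ_X(c^l + m). -/
open Filter

def IsSubshift {A : Type*} [TopologicalSpace A] (X : Set (Config A)) : Prop :=
  IsClosed X ∧ ∀ (u : ℤ × ℤ) (x : Config A), x ∈ X → shiftC u x ∈ X

def LinearlyBlockGluing {A : Type*} (X : Set (Config A)) : Prop :=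
  ∃ g : ℕ → ℕ, Monotone g ∧ (∃ C : ℝ, 0 < C ∧ ∀ n : ℕ, (g n : ℝ) ≤ C * (n : ℝ)) ∧
    BlockGluing X g

/-!
If a shift `u` glues every pair of `N`-blocks, it glues every pair of `n`-blocks for `n ≤ N`,
since each `n`-block is the corner of an `N`-block. Every `n ≥ 1` lies below some size
`c ^ l + m ≤ (c + m) n`, so a gap `f ≤ C · id` along these sizes yields the linear gap
`(⌈C⌉₊ + 1) (c + m) n` at every size `n`. Conversely a linear gap works along `2 ^ l`.
-/

def restrictBlock {A : Type*} {n N : ℕ} (h : n ≤ N) (P : Fin N × Fin N → A) :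
    Fin n × Fin n → A :=
  fun v => P (Fin.castLE h v.1, Fin.castLE h v.2)

theorem restrictBlock_blockAt {A : Type*} {n N : ℕ} (h : n ≤ N) (x : Config A) (u : ℤ × ℤ) :
    restrictBlock h (blockAt x u N) = blockAt x u n :=
  rfl

theorem exists_restrictBlock_eq_of_mem_lang {A : Type*} {X : Set (Config A)} {n N : ℕ}
    (h : n ≤ N) {p : Fin n × Fin n → A} (hp : p ∈ Lang X n) :
    ∃ P ∈ Lang X N, restrictBlock h P = p := by
  obtain ⟨x, hx, u, rfl⟩ := hp
  exact ⟨blockAt x u N, ⟨x, hx, u, rfl⟩, restrictBlock_blockAt h x u⟩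

theorem gluingSet_subset_restrictBlock {A : Type*} (X : Set (Config A)) {n N : ℕ} (h : n ≤ N)
    (P Q : Fin N × Fin N → A) :
    gluingSet X P Q ⊆ gluingSet X (restrictBlock h P) (restrictBlock h Q) := by
  rintro u ⟨x, hx, rfl, rfl⟩
  exact ⟨x, hx, restrictBlock_blockAt h x 0, restrictBlock_blockAt h x u⟩

theorem mem_gluingSet_of_le {A : Type*} {X : Set (Config A)} {n N : ℕ} (h : n ≤ N)
    {u : ℤ × ℤ} (hu : ∀ P ∈ Lang X N, ∀ Q ∈ Lang X N, u ∈ gluingSet X P Q)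
    {p q : Fin n × Fin n → A} (hp : p ∈ Lang X n) (hq : q ∈ Lang X n) :
    u ∈ gluingSet X p q := by
  obtain ⟨P, hP, rfl⟩ := exists_restrictBlock_eq_of_mem_lang h hp
  obtain ⟨Q, hQ, rfl⟩ := exists_restrictBlock_eq_of_mem_lang h hq
  exact gluingSet_subset_restrictBlock X h P Q (hu P hP Q hQ)

theorem exists_le_pow_add_le_mul {c : ℕ} (hc : 2 ≤ c) (m : ℕ) {n : ℕ} (hn : n ≠ 0) :
    ∃ l, n ≤ c ^ l + m ∧ c ^ l + m ≤ (c + m) * n := by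
  refine ⟨Nat.log c n + 1,
    (Nat.lt_pow_succ_log_self (by omega) n).le.trans (Nat.le_add_right _ m), ?_⟩
  have hpow : c ^ (Nat.log c n + 1) ≤ c * n := by
    rw [pow_succ, mul_comm]
    exact Nat.mul_le_mul_left c (Nat.pow_log_le_self c hn)
  nlinarith [Nat.one_le_iff_ne_zero.mpr hn]

theorem linearlyBlockGluing_of_blockGluing_mul {A : Type*} {X : Set (Config A)} (K : ℕ)
    (h : BlockGluing X (K * ·)) : LinearlyBlockGluing X := by
  refine ⟨(K * ·), fun a b hab => Nat.mul_le_mul_left K hab, ⟨K + 1, by positivity, ?_⟩, h⟩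
  intro n
  push_cast
  nlinarith [(n.cast_nonneg : (0 : ℝ) ≤ n)]

theorem natCast_le_ceil_mul {f : ℕ → ℕ} {C : ℝ} (hf : ∀ n : ℕ, (f n : ℝ) ≤ C * (n : ℝ))
    (n : ℕ) : f n ≤ ⌈C⌉₊ * n := by
  have : C * n ≤ ⌈C⌉₊ * n := mul_le_mul_of_nonneg_right (Nat.le_ceil C) n.cast_nonneg
  exact_mod_cast (hf n).trans this

theorem blockGluing_mul_of_pow_add {A : Type*} {X : Set (Config A)} {f : ℕ → ℕ} {C : ℝ}
    {c m : ℕ} (hf : ∀ n : ℕ, (f n : ℝ) ≤ C * (n : ℝ)) (hc : 2 ≤ c)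
    (hglue : ∀ l : ℕ, ∀ p ∈ Lang X (c ^ l + m), ∀ q ∈ Lang X (c ^ l + m), ∀ u : ℤ × ℤ,
      (f (c ^ l + m) : ℤ) + ((c ^ l + m : ℕ) : ℤ) ≤ normInf u → u ∈ gluingSet X p q) :
    BlockGluing X (((⌈C⌉₊ + 1) * (c + m)) * ·) := by
  intro n hn p hp q hq u hu
  obtain ⟨l, hnN, hNn⟩ := exists_le_pow_add_le_mul hc m (n := n) (by omega)
  have hgap : f (c ^ l + m) + (c ^ l + m) ≤ (⌈C⌉₊ + 1) * (c + m) * n := by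
    nlinarith [natCast_le_ceil_mul hf (c ^ l + m)]
  refine mem_gluingSet_of_le hnN (fun P hP Q hQ => hglue l P hP Q hQ u ?_) hp hq
  push_cast at hgap hu ⊢
  linarith

theorem stmt8_general {A : Type} (X : Set (Config A)) :
    LinearlyBlockGluing X ↔
      ∃ (f : ℕ → ℕ) (C : ℝ) (c m : ℕ), 0 < C ∧ (∀ n : ℕ, (f n : ℝ) ≤ C * (n : ℝ)) ∧
        2 ≤ c ∧
        ∀ l : ℕ, ∀ p ∈ Lang X (c ^ l + m), ∀ q ∈ Lang X (c ^ l + m), ∀ u : ℤ × ℤ,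
          (f (c ^ l + m) : ℤ) + ((c ^ l + m : ℕ) : ℤ) ≤ normInf u →
          u ∈ gluingSet X p q := by
  constructor
  · rintro ⟨g, -, ⟨C, hC, hlin⟩, hg⟩
    exact ⟨g, C, 2, 0, hC, hlin, le_rfl, fun l => hg _ Nat.one_le_two_pow⟩
  · rintro ⟨f, C, c, m, -, hf, hc, hglue⟩
    exact linearlyBlockGluing_of_blockGluing_mul _ (blockGluing_mul_of_pow_add hf hc hglue)

/-- A Z²-subshift is linearly block gluing iff the block gluing inclusion holds along some
exponentially growing sequence of sizes `c^l + m`. -/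
theorem stmt8 {A : Type} [Fintype A] [TopologicalSpace A] [DiscreteTopology A]
    (X : Set (Config A)) (hX : IsSubshift X) :
    LinearlyBlockGluing X ↔
      ∃ (f : ℕ → ℕ) (C : ℝ) (c m : ℕ), 0 < C ∧ (∀ n : ℕ, (f n : ℝ) ≤ C * (n : ℝ)) ∧
        2 ≤ c ∧
        ∀ l : ℕ, ∀ p ∈ Lang X (c ^ l + m), ∀ q ∈ Lang X (c ^ l + m), ∀ u : ℤ × ℤ,
          (f (c ^ l + m) : ℤ) + ((c ^ l + m : ℕ) : ℤ) ≤ normInf u →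
          u ∈ gluingSet X p q :=
  stmt8_general X
end

section
/- Let X and Y be Z²-subshifts and φ : X → Y a surjective sliding block code of radius r (φ(x)_u is determined by the restriction of x to u + ⟦−r,r⟧²), and let f : ℕ → ℕ be nondecreasing. If X is f-block gluing then Y is g-block gluing, where g(n) = f(n+2r) + 2r; likewise, if X is f-net gluing then Y is g-net gluing with the same g. -/
open Filter

def NetGluing {A : Type*} (X : Set (Config A)) (f : ℕ → ℕ) : Prop :=
  ∃ (w : (n : ℕ) → (Fin n × Fin n → A) → (Fin n × Fin n → A) → ℤ × ℤ)
    (ft : (n : ℕ) → (Fin n × Fin n → A) → (Fin n × Fin n → A) → ℕ),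
    ∀ n : ℕ, ∀ p ∈ Lang X n, ∀ q ∈ Lang X n,
      (∀ v : ℤ × ℤ, v ≠ 0 →
        w n p q + ((n : ℤ) + (ft n p q : ℤ)) • v ∈ gluingSet X p q) ∧
      ft n p q ≤ f n

/-- Factors through a surjective sliding block code of radius `r` of an `f`-block gluing
(resp. `f`-net gluing) subshift are `g`-block gluing (resp. `g`-net gluing), where
`g(n) = f(n + 2r) + 2r`. -/
theorem stmt9 {A B : Type} [Fintype A] [Fintype B]
    [TopologicalSpace A] [DiscreteTopology A] [TopologicalSpace B] [DiscreteTopology B]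
    (X : Set (Config A)) (Y : Set (Config B)) (hX : IsSubshift X) (hY : IsSubshift Y)
    (r : ℕ) (φ : Config A → Config B)
    (hmaps : ∀ x ∈ X, φ x ∈ Y)
    (hsurj : ∀ y ∈ Y, ∃ x ∈ X, φ x = y)
    (hcomm : ∀ (u : ℤ × ℤ) (x : Config A), x ∈ X → φ (shiftC u x) = shiftC u (φ x))
    (hloc : ∀ x ∈ X, ∀ y ∈ X, ∀ u : ℤ × ℤ,
      (∀ v : ℤ × ℤ, normInf v ≤ (r : ℤ) → x (u + v) = y (u + v)) → φ x u = φ y u)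
    (f : ℕ → ℕ) (hf : Monotone f) :
    (BlockGluing X f → BlockGluing Y fun n => f (n + 2 * r) + 2 * r) ∧
    (NetGluing X f → NetGluing Y fun n => f (n + 2 * r) + 2 * r) := by
  classical
  set rr : ℤ × ℤ := ((r : ℤ), (r : ℤ)) with hrr
  -- transfer lemma: equal (n+2r)-blocks in X map to equal n-blocks in Y
  have trans : ∀ (n : ℕ) (x z : Config A), x ∈ X → z ∈ X → ∀ a b : ℤ × ℤ,
      blockAt x a (n + 2*r) = blockAt z b (n + 2*r) →
      blockAt (φ z) (b + rr) n = blockAt (φ x) (a + rr) n := by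
    intro n x z hx hz a b hab
    funext v
    have hx' : shiftC (a - b) x ∈ X := hX.2 _ _ hx
    simp only [blockAt]
    have h1 : φ z (b + rr + (((v.1 : ℕ) : ℤ), ((v.2 : ℕ) : ℤ)))
        = φ (shiftC (a - b) x) (b + rr + (((v.1 : ℕ) : ℤ), ((v.2 : ℕ) : ℤ))) := by
      apply hloc z hz _ hx'
      intro ν hν
      have hν' : max |ν.1| |ν.2| ≤ (r : ℤ) := hν
      have hν1 : |ν.1| ≤ (r : ℤ) := le_trans (le_max_left _ _) hν'
      have hν2 : |ν.2| ≤ (r : ℤ) := le_trans (le_max_right _ _) hν'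
      rw [abs_le] at hν1 hν2
      have hv1 : (v.1 : ℕ) < n := v.1.isLt
      have hv2 : (v.2 : ℕ) < n := v.2.isLt
      set w1 : ℤ := (r : ℤ) + ((v.1 : ℕ) : ℤ) + ν.1 with hw1
      set w2 : ℤ := (r : ℤ) + ((v.2 : ℕ) : ℤ) + ν.2 with hw2
      have hb1 : w1.toNat < n + 2*r := by omega
      have hb2 : w2.toNat < n + 2*r := by omega
      have key := congrFun hab (⟨w1.toNat, hb1⟩, ⟨w2.toNat, hb2⟩)
      simp only [blockAt] at key
      have e1 : ((w1.toNat : ℕ) : ℤ) = w1 := by omega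
      have e2 : ((w2.toNat : ℕ) : ℤ) = w2 := by omega
      rw [e1, e2] at key
      simp only [shiftC]
      have eA : b + rr + (((v.1 : ℕ) : ℤ), ((v.2 : ℕ) : ℤ)) + ν = b + (w1, w2) := by
        simp only [hrr, hw1, hw2, Prod.ext_iff, Prod.fst_add, Prod.snd_add]
        constructor <;> ring
      have eB : b + rr + (((v.1 : ℕ) : ℤ), ((v.2 : ℕ) : ℤ)) + ν + (a - b) = a + (w1, w2) := by
        simp only [hrr, hw1, hw2, Prod.ext_iff, Prod.fst_add, Prod.snd_add, Prod.fst_sub,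
          Prod.snd_sub]
        constructor <;> ring
      rw [eA]
      have eB' : b + (w1, w2) + (a - b) = a + (w1, w2) := by
        simp only [Prod.ext_iff, Prod.fst_add, Prod.snd_add, Prod.fst_sub, Prod.snd_sub]
        constructor <;> ring
      rw [eB']
      exact key.symm
    rw [h1, hcomm (a - b) x hx]
    simp only [shiftC]
    congr 1
    simp only [Prod.ext_iff, Prod.fst_add, Prod.snd_add, Prod.fst_sub, Prod.snd_sub]
    constructor <;> ring
  -- lift lemma
  have lift : ∀ (n : ℕ) (p : Fin n × Fin n → B), p ∈ Lang Y n →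
      ∃ x ∈ X, blockAt (φ x) 0 n = p := by
    rintro n p ⟨y, hy, u, hu⟩
    obtain ⟨x, hx, hφx⟩ := hsurj (shiftC u y) (hY.2 u y hy)
    refine ⟨x, hx, ?_⟩
    rw [hφx]
    funext v
    simp only [blockAt, shiftC]
    rw [← hu]
    simp only [blockAt]
    congr 1
    simp only [Prod.ext_iff, Prod.fst_add, Prod.snd_add, Prod.fst_zero, Prod.snd_zero]
    constructor <;> ring
  -- main gluing transfer
  have main : ∀ (n : ℕ) (p q : Fin n × Fin n → B) (xp xq : Config A),
      xp ∈ X → xq ∈ X → blockAt (φ xp) 0 n = p → blockAt (φ xq) 0 n = q →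
      ∀ u : ℤ × ℤ,
      u ∈ gluingSet X (blockAt xp (-rr) (n + 2*r)) (blockAt xq (-rr) (n + 2*r)) →
      u ∈ gluingSet Y p q := by
    rintro n p q xp xq hxp hxq hp hq u ⟨z, hz, hQ, hP⟩
    refine ⟨shiftC rr (φ z), hY.2 rr _ (hmaps z hz), ?_, ?_⟩
    · have h := trans n xq z hxq hz (-rr) 0 hQ.symm
      have hc : -rr + rr = (0 : ℤ × ℤ) := by simp
      rw [hc, hq] at h
      rw [← h]
      funext v
      simp only [blockAt, shiftC]
      congr 1
      simp only [Prod.ext_iff, Prod.fst_add, Prod.snd_add, Prod.fst_zero, Prod.snd_zero]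
      constructor <;> ring
    · have h := trans n xp z hxp hz (-rr) u hP.symm
      have hc : -rr + rr = (0 : ℤ × ℤ) := by simp
      rw [hc, hp] at h
      rw [← h]
      funext v
      simp only [blockAt, shiftC]
      congr 1
      simp only [Prod.ext_iff, Prod.fst_add, Prod.snd_add, Prod.fst_zero, Prod.snd_zero]
      constructor <;> ring
  constructor
  · intro hBG n hn p hp q hq u hu
    obtain ⟨xp, hxp, hpp⟩ := lift n p hp
    obtain ⟨xq, hxq, hqq⟩ := lift n q hq
    apply main n p q xp xq hxp hxq hpp hqq u
    apply hBG (n + 2*r) (by omega) _ ⟨xp, hxp, -rr, rfl⟩ _ ⟨xq, hxq, -rr, rfl⟩ u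
    push_cast at hu ⊢
    linarith
  · rintro ⟨wX, ftX, hnet⟩
    choose xl hxl hbl using lift
    refine ⟨fun n p q => if h : p ∈ Lang Y n ∧ q ∈ Lang Y n then
        wX (n + 2*r) (blockAt (xl n p h.1) (-rr) (n + 2*r))
          (blockAt (xl n q h.2) (-rr) (n + 2*r)) else 0,
      fun n p q => if h : p ∈ Lang Y n ∧ q ∈ Lang Y n then
        ftX (n + 2*r) (blockAt (xl n p h.1) (-rr) (n + 2*r))
          (blockAt (xl n q h.2) (-rr) (n + 2*r)) + 2*r else 0, ?_⟩
    intro n p hp q hq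
    have hpq : p ∈ Lang Y n ∧ q ∈ Lang Y n := ⟨hp, hq⟩
    simp only [dif_pos hpq]
    set P := blockAt (xl n p hpq.1) (-rr) (n + 2*r) with hPdef
    set Q := blockAt (xl n q hpq.2) (-rr) (n + 2*r) with hQdef
    have hPL : P ∈ Lang X (n + 2*r) := ⟨xl n p hpq.1, hxl n p hpq.1, -rr, rfl⟩
    have hQL : Q ∈ Lang X (n + 2*r) := ⟨xl n q hpq.2, hxl n q hpq.2, -rr, rfl⟩
    obtain ⟨h1, h2⟩ := hnet (n + 2*r) P hPL Q hQL
    constructor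
    · intro v hv
      have := h1 v hv
      have hsmul : ((n : ℤ) + ((ftX (n + 2*r) P Q + 2*r : ℕ) : ℤ)) • v
          = (((n + 2*r : ℕ) : ℤ) + (ftX (n + 2*r) P Q : ℤ)) • v := by
        congr 1
        push_cast
        ring
      rw [hsmul]
      exact main n p q (xl n p hpq.1) (xl n q hpq.2) (hxl n p hpq.1) (hxl n q hpq.2)
        (hbl n p hpq.1) (hbl n q hpq.2) _ this
    · have := h2
      omega
end

section
/- For every n ≥ 1 and every locally admissible n-block p of Δ (i.e., a pattern on ⟦0,n−1⟧² over {→,↓} containing no forbidden pattern of Δ), there exists a rectangular pattern Q appearing in a configuration of Δ which has p as a sub-pattern, whose width and height are each at most 5n, whose topmost and bottommost rows consist only of → symbols, and in which the number of curves crossing Q equals the number of columns of Q. In particular every locally admissible pattern of Δ is globally admissible (appears in a configuration of Δ). -/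
open Filter

/-- The local rules of the SFT `Δ` on alphabet `{→, ↓}` (`true` = `→`, `false` = `↓`):
no `↓` directly above a `↓`, and the 2×2 pattern with bottom row `(→,→)` and top row
`(→,↓)` is forbidden. -/
def DeltaRules (δ : Config Bool) : Prop :=
  ∀ u : ℤ × ℤ,
    ¬(δ u = false ∧ δ (u + (0, 1)) = false) ∧
    ¬(δ u = true ∧ δ (u + (1, 0)) = true ∧ δ (u + (0, 1)) = true ∧
      δ (u + (1, 1)) = false)

/-- Successor along a curve: from a `→`-position `i`, go to `i+(1,-1)` if the symbol on
the right of `i` is `↓`, and to `i+(1,0)` otherwise. -/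
def succPos (δ : Config Bool) (i : ℤ × ℤ) : ℤ × ℤ :=
  if δ (i + (1, 0)) = true then i + (1, 0) else i + (1, -1)

/-- Predecessor along a curve. -/
def predPos (δ : Config Bool) (i : ℤ × ℤ) : ℤ × ℤ :=
  if δ (i + (-1, 0)) = true then i + (-1, 0) else i + (-1, 1)

/-- The lowest `→`-position of column `0` among `(0,0)`, `(0,1)`. -/
def colBase (δ : Config Bool) : ℤ := if δ (0, 0) = true then 0 else 1

/-- Enumeration, upwards, of the `→`-positions of column 0 starting from the base. -/
def colUp (δ : Config Bool) : ℕ → ℤ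
  | 0 => colBase δ
  | k + 1 => if δ (0, colUp δ k + 1) = true then colUp δ k + 1 else colUp δ k + 2

/-- Enumeration, downwards, of the `→`-positions of column 0 starting from the base. -/
def colDown (δ : Config Bool) : ℕ → ℤ
  | 0 => colBase δ
  | k + 1 => if δ (0, colDown δ k - 1) = true then colDown δ k - 1 else colDown δ k - 2

/-- The height of the `k`-th `→`-position of column 0 (`k ∈ ℤ`), counting from the base. -/
def colEnum (δ : Config Bool) (k : ℤ) : ℤ :=
  if 0 ≤ k then colUp δ k.toNat else colDown δ (-k).toNat

/-- `curvePos δ k i` is `φ_{δ,k}(i)`: the `i`-th position of the `k`-th curve of `δ`. -/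
def curvePos (δ : Config Bool) (k i : ℤ) : ℤ × ℤ :=
  if 0 ≤ i then (succPos δ)^[i.toNat] ((0 : ℤ), colEnum δ k)
  else (predPos δ)^[(-i).toNat] ((0 : ℤ), colEnum δ k)

/-- One step along a curve: `j` is the successor of the `→`-position `i`. -/
def curveStep (δ : Config Bool) (i j : ℤ × ℤ) : Prop :=
  δ i = true ∧ j = succPos δ i

/-- The curve through the `→`-position `i`: the connected component of `i` under the
successor relation. -/
def curveOf (δ : Config Bool) (i : ℤ × ℤ) : Set (ℤ × ℤ) :=
  {j | Relation.EqvGen (curveStep δ) i j}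

/-- The set of curves of `δ` meeting the set `S`. -/
def curvesThrough (δ : Config Bool) (S : Set (ℤ × ℤ)) : Set (Set (ℤ × ℤ)) :=
  {c | ∃ i ∈ S, δ i = true ∧ c = curveOf δ i}

def boxSet (n : ℕ) : Set (ℤ × ℤ) :=
  {v | 0 ≤ v.1 ∧ v.1 < (n : ℤ) ∧ 0 ≤ v.2 ∧ v.2 < (n : ℤ)}

def rectSet (w h : ℕ) : Set (ℤ × ℤ) :=
  {v | 0 ≤ v.1 ∧ v.1 < (w : ℤ) ∧ 0 ≤ v.2 ∧ v.2 < (h : ℤ)}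

/-- A (square) block over `{→,↓}` is locally admissible for `Δ` if no forbidden pattern
of `Δ` occurs inside it. -/
def LocallyAdmissible (n : ℕ) (p : Fin n × Fin n → Bool) : Prop :=
  (∀ (i j : ℕ) (hi : i < n) (hj : j + 1 < n),
      ¬(p (⟨i, hi⟩, ⟨j, by omega⟩) = false ∧ p (⟨i, hi⟩, ⟨j + 1, hj⟩) = false)) ∧
  (∀ (i j : ℕ) (hi : i + 1 < n) (hj : j + 1 < n),
      ¬(p (⟨i, by omega⟩, ⟨j, by omega⟩) = true ∧
        p (⟨i + 1, hi⟩, ⟨j, by omega⟩) = true ∧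
        p (⟨i, by omega⟩, ⟨j + 1, hj⟩) = true ∧
        p (⟨i + 1, hi⟩, ⟨j + 1, hj⟩) = false))

/-!
Extend `p` to a configuration of `Δ`: repeat its first column to the left, put `→` to its right
and above it, and below it continue every `↓` of its bottom row having a `→` on its left by a
diagonal of `↓`s going down-left. In a configuration of `Δ` the successor map is injective on
`→`-positions, so a curve crossing a rectangle is determined by its first position there: a `→`
of the left column, or a start (a position without predecessor). Starts sit just right of the
right-maximal `↓`s of `p`, which are at most as many as the `↓`s of `p` with no `↓` on their
left or lower left; these lie on the left column or the bottom row of `p`, so there are fewer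
than `2n` of them. Taking the rectangle from height `-n` to `n` plus the number of `↓`s in its
left column leaves `2n + 1` arrows `→` in that column, and its width is then chosen to be the
number of curves, at most `4n`.
-/

open Function Finset

theorem iterate_meet_equivalence {α : Type*} (f : α → α) :
    Equivalence fun x y => ∃ a b : ℕ, f^[a] x = f^[b] y where
  refl _ := ⟨0, 0, rfl⟩
  symm := fun ⟨a, b, h⟩ => ⟨b, a, h.symm⟩
  trans := fun ⟨a, b, h⟩ ⟨c, d, h'⟩ => ⟨c + a, b + d, by
    rw [iterate_add_apply, h, ← iterate_add_apply, add_comm c b, iterate_add_apply, h',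
      ← iterate_add_apply]⟩

theorem mem_image_add_rectSet {u v : ℤ × ℤ} {w h : ℕ} :
    v ∈ (fun s => u + s) '' rectSet w h ↔
      u.1 ≤ v.1 ∧ v.1 < u.1 + w ∧ u.2 ≤ v.2 ∧ v.2 < u.2 + h := by
  constructor
  · rintro ⟨s, ⟨h₁, h₂, h₃, h₄⟩, rfl⟩
    simp only [Prod.fst_add, Prod.snd_add]
    omega
  · rintro ⟨h₁, h₂, h₃, h₄⟩
    refine ⟨v - u, ⟨?_, ?_, ?_, ?_⟩, add_sub_cancel u v⟩ <;>
      simp only [Prod.fst_sub, Prod.snd_sub] <;> omega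

section Curves

variable {δ : Config Bool}

theorem DeltaRules.up_of_false (hδ : DeltaRules δ) {x y : ℤ} (h : δ (x, y) = false) :
    δ (x, y + 1) = true := by
  have := (hδ (x, y)).1
  simp only [Prod.mk_add_mk, add_zero] at this
  simpa [h] using this

theorem DeltaRules.corner (hδ : DeltaRules δ) {x y : ℤ} (h₀₀ : δ (x, y) = true)
    (h₁₀ : δ (x + 1, y) = true) (h₀₁ : δ (x, y + 1) = true) :
    δ (x + 1, y + 1) = true := by
  have := (hδ (x, y)).2
  simp only [Prod.mk_add_mk, add_zero] at this
  simpa [h₀₀, h₁₀, h₀₁] using this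

theorem deltaRules_of_support (hup : ∀ x y, δ (x, y) = false → δ (x, y + 1) = true)
    (hsupp : ∀ x y, δ (x, y) = false → δ (x - 1, y) = false ∨ δ (x - 1, y - 1) = false) :
    DeltaRules δ := by
  rintro ⟨x, y⟩
  simp only [Prod.mk_add_mk, add_zero]
  refine ⟨fun ⟨h₀, h₁⟩ => by simp [hup x y h₀] at h₁,
    fun ⟨h₀₀, _, h₀₁, h₁₁⟩ => ?_⟩
  rcases hsupp (x + 1) (y + 1) h₁₁ with h | h <;> simp_all

theorem succPos_mk (x y : ℤ) :
    succPos δ (x, y) = if δ (x + 1, y) = true then (x + 1, y) else (x + 1, y - 1) := by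
  simp only [succPos, Prod.mk_add_mk, add_zero, ← sub_eq_add_neg]

theorem predPos_mk (x y : ℤ) :
    predPos δ (x, y) = if δ (x - 1, y) = true then (x - 1, y) else (x - 1, y + 1) := by
  simp only [predPos, Prod.mk_add_mk, add_zero, ← sub_eq_add_neg]

theorem fst_succPos (i : ℤ × ℤ) : (succPos δ i).1 = i.1 + 1 := by
  unfold succPos; split <;> rfl

theorem fst_iterate_succPos (i : ℤ × ℤ) (c : ℕ) : ((succPos δ)^[c] i).1 = i.1 + c := by
  induction c with
  | zero => simp
  | succ c ih => rw [iterate_succ_apply', fst_succPos, ih]; push_cast; ring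

theorem snd_predPos_mem {N : ℤ} (hN : ∀ v, δ v = false → v.2 < N) (i : ℤ × ℤ) :
    i.2 ≤ (predPos δ i).2 ∧ (predPos δ i).2 ≤ max i.2 N := by
  obtain ⟨x, y⟩ := i
  rw [predPos_mk]
  split_ifs with h
  · simp
  · have := hN _ (Bool.of_not_eq_true h)
    simp only
    omega

/-- A `→`-position which is the successor of no `→`-position. -/
def IsStart (δ : Config Bool) (i : ℤ × ℤ) : Prop :=
  δ i = true ∧ δ (i.1 - 1, i.2) = false ∧ δ (i.1, i.2 + 1) = true

theorem succPos_ne_of_isStart {i j : ℤ × ℤ} (hj : δ j = true) (hi : IsStart δ i) :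
    succPos δ j ≠ i := by
  obtain ⟨a, b⟩ := i
  obtain ⟨c, d⟩ := j
  obtain ⟨-, hl, hu⟩ := hi
  rw [succPos_mk]
  split_ifs with h <;> intro he <;> simp only [Prod.mk.injEq] at he <;>
    obtain ⟨rfl, rfl⟩ := he
  · simp_all
  · simp_all [sub_add_cancel]

theorem succPos_predPos {i : ℤ × ℤ} (h : δ i = true) (hi : ¬IsStart δ i) :
    succPos δ (predPos δ i) = i := by
  obtain ⟨x, y⟩ := i
  rw [predPos_mk]
  split_ifs with hl
  · simp [succPos_mk, h]
  · have hu : δ (x, y + 1) = false := by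
      simpa [IsStart, h, Bool.of_not_eq_true hl] using hi
    simp [succPos_mk, hu]

section

variable (hδ : DeltaRules δ)
include hδ

theorem DeltaRules.mapsTo_succPos :
    Set.MapsTo (succPos δ) {v | δ v = true} {v | δ v = true} := by
  rintro ⟨x, y⟩ (h : δ (x, y) = true)
  rw [succPos_mk]
  split_ifs with hr
  · exact hr
  · by_contra hd
    have := hδ.up_of_false (Bool.of_not_eq_true hd)
    simp_all

theorem DeltaRules.predPos_true {i : ℤ × ℤ} (h : δ i = true) : δ (predPos δ i) = true := by
  obtain ⟨x, y⟩ := i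
  rw [predPos_mk]
  split_ifs with hl
  · exact hl
  · exact hδ.up_of_false (Bool.of_not_eq_true hl)

theorem DeltaRules.predPos_succPos {i : ℤ × ℤ} (h : δ i = true) :
    predPos δ (succPos δ i) = i := by
  obtain ⟨x, y⟩ := i
  rw [succPos_mk]
  split_ifs with hr
  · simp [predPos_mk, h]
  · -- a `→` at `(x, y - 1)` would complete a forbidden 2×2 pattern
    have hd : δ (x, y - 1) = false := by
      by_contra hd
      have := hδ.corner (by simpa using hd)
        (by simpa [succPos_mk, hr] using hδ.mapsTo_succPos h) (by simpa using h)
      simp_all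
    simp [predPos_mk, hd]

theorem DeltaRules.injOn_succPos : Set.InjOn (succPos δ) {v | δ v = true} :=
  Set.LeftInvOn.injOn fun _ hi => hδ.predPos_succPos hi

theorem DeltaRules.eq_zero_of_iterate_eq_isStart {i j : ℤ × ℤ} (hj : δ j = true)
    (hi : IsStart δ i) {c : ℕ} (h : (succPos δ)^[c] j = i) : c = 0 := by
  cases c with
  | zero => rfl
  | succ c =>
    rw [iterate_succ_apply'] at h
    exact absurd h (succPos_ne_of_isStart (hδ.mapsTo_succPos.iterate c hj) hi)

end

theorem curveOf_eq_curveOf_iff {i j : ℤ × ℤ} :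
    curveOf δ i = curveOf δ j ↔ Relation.EqvGen (curveStep δ) i j := by
  have := Relation.EqvGen.is_equivalence (curveStep δ)
  refine ⟨fun h => ?_, fun h => Set.ext fun k => ⟨this.trans (this.symm h), this.trans h⟩⟩
  have hj : j ∈ curveOf δ j := this.refl j
  rwa [← h] at hj

theorem DeltaRules.curveOf_eq_curveOf_iff (hδ : DeltaRules δ) {i j : ℤ × ℤ}
    (hi : δ i = true) (hj : δ j = true) :
    curveOf δ i = curveOf δ j ↔
      ∃ c : ℕ, (succPos δ)^[c] i = j ∨ (succPos δ)^[c] j = i := by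
  have hstep : ∀ c : ℕ, ∀ k, δ k = true →
      Relation.EqvGen (curveStep δ) k ((succPos δ)^[c] k) := by
    intro c
    induction c with
    | zero => exact fun k _ => .refl k
    | succ c ih =>
      intro k hk
      rw [iterate_succ_apply]
      exact .trans _ _ _ (.rel _ _ ⟨hk, rfl⟩) (ih _ (hδ.mapsTo_succPos hk))
  rw [_root_.curveOf_eq_curveOf_iff]
  refine ⟨fun h => ?_, ?_⟩
  · obtain ⟨a, b, hab⟩ := (iterate_meet_equivalence (succPos δ)).eqvGen_iff.mp
      (Relation.EqvGen.mono (fun k l ⟨_, hl⟩ => ⟨1, 0, hl.symm⟩) _ _ h)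
    have hinj := hδ.injOn_succPos.iterate hδ.mapsTo_succPos
    rcases le_total b a with hba | hab'
    · refine ⟨a - b, Or.inl (hinj b (hδ.mapsTo_succPos.iterate _ hi) hj ?_)⟩
      rwa [← iterate_add_apply, Nat.add_sub_cancel' hba]
    · refine ⟨b - a, Or.inr (hinj a (hδ.mapsTo_succPos.iterate _ hj) hi ?_)⟩
      rw [← iterate_add_apply, Nat.add_sub_cancel' hab', hab]
  · rintro ⟨c, h | h⟩
    · exact h ▸ hstep c i hi
    · exact .symm _ _ (h ▸ hstep c j hj)

theorem DeltaRules.exists_iterate_eq_of_column_or_start (hδ : DeltaRules δ) {N : ℤ}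
    (hN : ∀ v, δ v = false → v.2 < N) (x₀ : ℤ) :
    ∀ (k : ℕ) (i : ℤ × ℤ), δ i = true → i.1 = x₀ + k →
      ∃ j : ℤ × ℤ, ∃ c : ℕ, (succPos δ)^[c] j = i ∧ δ j = true ∧
        (j.1 = x₀ ∨ IsStart δ j) ∧ i.2 ≤ j.2 ∧ j.2 ≤ max i.2 N := by
  intro k
  induction k with
  | zero =>
    exact fun i hi hx => ⟨i, 0, rfl, hi, .inl (by simpa using hx), le_rfl, le_max_left _ _⟩
  | succ k ih =>
    intro i hi hx
    by_cases hs : IsStart δ i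
    · exact ⟨i, 0, rfl, hi, .inr hs, le_rfl, le_max_left _ _⟩
    have hx' : (predPos δ i).1 = x₀ + k := by
      obtain ⟨x, y⟩ := i
      rw [predPos_mk]; split_ifs <;> (simp only at hx ⊢; push_cast at hx; omega)
    obtain ⟨j, c, hc, hj, hjx, hlo, hhi⟩ := ih _ (hδ.predPos_true hi) hx'
    have := snd_predPos_mem hN i
    refine ⟨j, c + 1, ?_, hj, hjx, by omega, by omega⟩
    rw [iterate_succ_apply', hc, succPos_predPos hi hs]

theorem DeltaRules.ncard_curvesThrough (hδ : DeltaRules δ) {S : Set (ℤ × ℤ)}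
    {T : Finset (ℤ × ℤ)} {x₀ : ℤ} (hTS : ↑T ⊆ S)
    (hT : ∀ j ∈ T, δ j = true ∧ x₀ ≤ j.1 ∧ (j.1 = x₀ ∨ IsStart δ j))
    (hcover : ∀ i ∈ S, δ i = true → ∃ j ∈ T, ∃ c : ℕ, (succPos δ)^[c] j = i) :
    (curvesThrough δ S).ncard = T.card := by
  have hsep : ∀ j ∈ T, ∀ j' ∈ T, ∀ c : ℕ, (succPos δ)^[c] j = j' → j = j' := by
    intro j hj j' hj' c h
    suffices c = 0 by simpa [this] using h
    rcases (hT j' hj').2.2 with hx | hs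
    · have := fst_iterate_succPos (δ := δ) j c
      have := (hT j hj).2.1
      rw [h] at *; omega
    · exact hδ.eq_zero_of_iterate_eq_isStart (hT j hj).1 hs h
  have himage : curvesThrough δ S = curveOf δ '' ↑T := by
    ext γ
    constructor
    · rintro ⟨i, hiS, hi, rfl⟩
      obtain ⟨j, hjT, c, rfl⟩ := hcover i hiS hi
      exact ⟨j, hjT, (hδ.curveOf_eq_curveOf_iff (hT j hjT).1 hi).2 ⟨c, .inl rfl⟩⟩
    · rintro ⟨j, hjT, rfl⟩
      exact ⟨j, hTS hjT, (hT j hjT).1, rfl⟩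
  have hinj : Set.InjOn (curveOf δ) T := by
    intro j hj j' hj' h
    obtain ⟨c, h | h⟩ := (hδ.curveOf_eq_curveOf_iff (hT j hj).1 (hT j' hj').1).1 h
    · exact hsep j hj j' hj' c h
    · exact (hsep j' hj' j hj c h).symm
  rw [himage, hinj.ncard_image, Set.ncard_coe_finset]

end Curves

namespace Delta

section Completion

variable (n : ℕ) (p : Fin n × Fin n → Bool)

/-- `p` on the box, its first column repeated to the left in the rows of the box, and `→`
everywhere else. -/
def band (v : ℤ × ℤ) : Bool :=
  if h : 0 ≤ v.2 ∧ v.2 < n ∧ v.1 < n then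
    p (⟨(max v.1 0).toNat, by omega⟩, ⟨v.2.toNat, by omega⟩)
  else true

def unsupported (z : ℤ) : Bool := band n p (z - 1, 0) && !band n p (z, 0)

def completion : Config Bool := fun v =>
  if v.2 < 0 then !unsupported n p (v.1 - v.2) else band n p v

variable {n p}

theorem band_natCast (a b : ℕ) (ha : a < n) (hb : b < n) :
    band n p (a, b) = p (⟨a, ha⟩, ⟨b, hb⟩) := by
  rw [band, dif_pos (by omega)]
  congr; simp

theorem band_max_zero (x y : ℤ) : band n p (max x 0, y) = band n p (x, y) := by
  unfold band
  simp only [max_assoc, max_self]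
  split_ifs <;> first | rfl | (exfalso; omega)

theorem band_false {v : ℤ × ℤ} (h : band n p v = false) :
    0 ≤ v.2 ∧ v.2 < n ∧ v.1 < n := by
  by_contra hv
  simp [band, dif_neg hv] at h

theorem unsupported_true {z : ℤ} (h : unsupported n p z = true) :
    1 ≤ z ∧ band n p (z - 1, 0) = true ∧ band n p (z, 0) = false := by
  simp only [unsupported, Bool.and_eq_true, Bool.not_eq_eq_eq_not, Bool.not_true] at h
  refine ⟨?_, h⟩
  by_contra hz
  rw [← band_max_zero, ← band_max_zero z, max_eq_right (by omega), max_eq_right (by omega)] at h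
  simp_all

theorem unsupported_of_le {z : ℤ} (hz : n ≤ z) : unsupported n p z = false := by
  by_contra h
  have := band_false (unsupported_true (Bool.of_not_eq_false h)).2.2
  simp only at this
  omega

theorem completion_of_neg {x y : ℤ} (hy : y < 0) :
    completion n p (x, y) = !unsupported n p (x - y) := if_pos hy

theorem completion_of_nonneg {x y : ℤ} (hy : 0 ≤ y) :
    completion n p (x, y) = band n p (x, y) :=
  if_neg (not_lt.2 hy)

theorem completion_of_le {x y : ℤ} (hy : n ≤ y) : completion n p (x, y) = true := by
  rw [completion_of_nonneg (by omega)]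
  by_contra h
  have := band_false (Bool.of_not_eq_true h)
  simp only at this
  omega

theorem completion_false_lt {v : ℤ × ℤ} (h : completion n p v = false) : v.2 < n := by
  obtain ⟨x, y⟩ := v
  rcases lt_or_ge y 0 with hy | hy
  · simp only; omega
  · rw [completion_of_nonneg hy] at h
    exact (band_false h).2.1

theorem nonneg_of_completion_rightMaximal {x y : ℤ} (h : completion n p (x, y) = false)
    (hr : completion n p (x + 1, y) = true) (hur : completion n p (x + 1, y + 1) = true) :
    0 ≤ x ∧ 0 ≤ y := by
  rcases lt_or_ge y 0 with hy | hy
  · -- `(x, y)` lies on a diagonal, which continues at `(x + 1, y + 1)`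
    rw [completion_of_neg hy, Bool.not_eq_false'] at h
    rcases lt_or_ge (y + 1) 0 with hy' | hy'
    · rw [completion_of_neg hy', show x + 1 - (y + 1) = x - y by ring, h] at hur
      simp at hur
    · rw [completion_of_nonneg hy', show x + 1 = x - y by omega, show y + 1 = 0 by omega,
        (unsupported_true h).2.2] at hur
      simp at hur
  · rw [completion_of_nonneg hy] at h hr
    refine ⟨?_, hy⟩
    by_contra hx
    rw [← band_max_zero, max_eq_right (by omega)] at h hr
    simp_all

variable (hadm : LocallyAdmissible n p)
include hadm

theorem band_up {x y : ℤ} (h : band n p (x, y) = false) : band n p (x, y + 1) = true := by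
  obtain ⟨hy, -, -⟩ := band_false h
  rw [← band_max_zero] at h ⊢
  obtain ⟨a, ha⟩ : ∃ a : ℕ, max x 0 = a := ⟨(max x 0).toNat, by omega⟩
  obtain ⟨b, rfl⟩ : ∃ b : ℕ, y = b := ⟨y.toNat, by omega⟩
  obtain ⟨-, hb, han⟩ := band_false h
  simp only [ha] at h hb han ⊢
  by_cases hb' : b + 1 < n
  · rw [band_natCast a b (by omega) (by omega)] at h
    rw [show (b : ℤ) + 1 = (b + 1 : ℕ) by push_cast; ring,
      band_natCast a (b + 1) (by omega) hb']
    by_contra h'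
    exact hadm.1 a b (by omega) hb' ⟨h, Bool.of_not_eq_true h'⟩
  · by_contra h'
    have := band_false (Bool.of_not_eq_true h')
    simp only at this
    omega

theorem band_support {x y : ℤ} (h : band n p (x, y) = false) (hy : 1 ≤ y) :
    band n p (x - 1, y) = false ∨ band n p (x - 1, y - 1) = false := by
  rcases lt_or_ge x 1 with hx | hx
  · left
    rw [← band_max_zero, max_eq_right (by omega : x - 1 ≤ 0)]
    rwa [← band_max_zero, max_eq_right (by omega : x ≤ 0)] at h
  obtain ⟨-, hyn, hxn⟩ := band_false h
  have hbelow : band n p (x, y - 1) = true := by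
    by_contra h'
    have := band_up hadm (Bool.of_not_eq_true h')
    rw [sub_add_cancel] at this
    simp_all
  obtain ⟨a, rfl⟩ : ∃ a : ℕ, x = a + 1 := ⟨(x - 1).toNat, by omega⟩
  obtain ⟨b, rfl⟩ : ∃ b : ℕ, y = b + 1 := ⟨(y - 1).toNat, by omega⟩
  simp only [add_sub_cancel_right] at hbelow hyn hxn ⊢
  have h₁₁ := band_natCast (p := p) (a + 1) (b + 1) (by omega) (by omega)
  have h₁₀ := band_natCast (p := p) (a + 1) b (by omega) (by omega)
  have h₀₁ := band_natCast (p := p) a (b + 1) (by omega) (by omega)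
  have h₀₀ := band_natCast (p := p) a b (by omega) (by omega)
  push_cast at h₁₁ h₁₀ h₀₁
  by_contra hc
  simp only [not_or, Bool.not_eq_false] at hc
  exact hadm.2 a b (by omega) (by omega)
    ⟨h₀₀ ▸ hc.2, h₁₀ ▸ hbelow, h₀₁ ▸ hc.1, h₁₁ ▸ h⟩

theorem completion_rules : DeltaRules (completion n p) := by
  refine deltaRules_of_support (fun x y h => ?_) (fun x y h => ?_)
  · rcases lt_or_ge y 0 with hy | hy
    · rw [completion_of_neg hy, Bool.not_eq_false'] at h
      obtain ⟨-, hl, -⟩ := unsupported_true h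
      rcases lt_or_ge (y + 1) 0 with hy' | hy'
      · rw [completion_of_neg hy', Bool.not_eq_true']
        by_contra h'
        have := (unsupported_true (Bool.of_not_eq_false h')).2.2
        rw [show x - (y + 1) = x - y - 1 by ring] at this
        simp_all
      · rwa [completion_of_nonneg hy', show x = x - y - 1 by omega, show y + 1 = 0 by omega]
    · rw [completion_of_nonneg hy] at h
      rw [completion_of_nonneg (by omega)]
      exact band_up hadm h
  · rcases lt_or_ge y 0 with hy | hy
    · right
      rwa [completion_of_neg (by omega), show x - 1 - (y - 1) = x - y by ring,
        ← completion_of_neg hy]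
    rw [completion_of_nonneg hy] at h
    rcases lt_or_ge y 1 with hy' | hy'
    · obtain rfl : y = 0 := by omega
      cases hl : band n p (x - 1, 0)
      · left; rwa [completion_of_nonneg le_rfl]
      · right
        rw [completion_of_neg (by omega), Bool.not_eq_false', show x - 1 - (0 - 1) = x by ring]
        simp [unsupported, hl, h]
    · rcases band_support hadm h hy' with h' | h'
      · left; rwa [completion_of_nonneg hy]
      · right; rwa [completion_of_nonneg (by omega)]

end Completion

section Counting

def rightMaximal (D : Finset (ℤ × ℤ)) : Finset (ℤ × ℤ) :=
  D.filter fun c => (c.1 + 1, c.2) ∉ D ∧ (c.1 + 1, c.2 + 1) ∉ D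

def leftMinimal (D : Finset (ℤ × ℤ)) : Finset (ℤ × ℤ) :=
  D.filter fun c => (c.1 - 1, c.2) ∉ D ∧ (c.1 - 1, c.2 - 1) ∉ D

theorem card_rightMaximal_le_card_leftMinimal {D : Finset (ℤ × ℤ)}
    (hD : ∀ c ∈ D, (c.1, c.2 + 1) ∉ D) : #(rightMaximal D) ≤ #(leftMinimal D) := by
  -- a point with a neighbour on its left or lower left is sent to one of them; since no two
  -- points of `D` are vertically adjacent, this is injective
  let g : ℤ × ℤ → ℤ × ℤ := fun c =>
    if (c.1 - 1, c.2) ∈ D then (c.1 - 1, c.2) else (c.1 - 1, c.2 - 1)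
  have hmaps : Set.MapsTo g ↑(D \ leftMinimal D) ↑(D \ rightMaximal D) := by
    intro c hc
    simp only [coe_sdiff, Set.mem_sdiff, mem_coe, leftMinimal, rightMaximal, mem_filter,
      not_and, not_not] at hc ⊢
    by_cases h : (c.1 - 1, c.2) ∈ D <;> simp_all [g]
  have hinj : Set.InjOn g ↑(D \ leftMinimal D) := by
    intro c hc c' hc' he
    simp only [coe_sdiff, Set.mem_sdiff, mem_coe] at hc hc'
    by_cases h : (c.1 - 1, c.2) ∈ D <;> by_cases h' : (c'.1 - 1, c'.2) ∈ D <;>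
      simp only [g, h, h', if_true, if_false, Prod.mk.injEq] at he
    · exact Prod.ext (by omega) he.2
    · have hc'c : c' = (c.1, c.2 + 1) := Prod.ext (by omega) (by omega)
      exact (hD c hc.1 (hc'c ▸ hc'.1)).elim
    · have hcc' : c = (c'.1, c'.2 + 1) := Prod.ext (by omega) (by omega)
      exact (hD c' hc'.1 (hcc' ▸ hc.1)).elim
    · exact Prod.ext (by omega) (by omega)
  have := card_le_card_of_injOn g hmaps hinj
  have hl : leftMinimal D ⊆ D := filter_subset _ D
  have hr : rightMaximal D ⊆ D := filter_subset _ D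
  rw [card_sdiff_of_subset hl, card_sdiff_of_subset hr] at this
  have := card_le_card hl
  have := card_le_card hr
  omega

variable (n : ℕ) (p : Fin n × Fin n → Bool)

noncomputable def downs : Finset (ℤ × ℤ) :=
  (Ico 0 (n : ℤ) ×ˢ Ico 0 (n : ℤ)).filter fun v => band n p v = false

noncomputable def numStarts : ℕ := #(rightMaximal (downs n p))

noncomputable def numLeftDowns : ℕ :=
  #((Ico (-(n : ℤ)) n).filter fun y => completion n p (0, y) = false)

noncomputable def width : ℕ := 2 * n + 1 + numStarts n p

noncomputable def height : ℕ := 2 * n + 1 + numLeftDowns n p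

/-- The first positions of the curves crossing the rectangle
`[0, width) × [-n, n + numLeftDowns]` inside it. -/
noncomputable def curveOrigins : Finset (ℤ × ℤ) :=
  ((Icc (-(n : ℤ)) (n + numLeftDowns n p)).filter fun y => completion n p (0, y) = true).image
      (fun y => (0, y)) ∪
    (rightMaximal (downs n p)).image fun c => (c.1 + 1, c.2)

variable {n p}

theorem mem_downs_iff {x y : ℤ} :
    (x, y) ∈ downs n p ↔ 0 ≤ x ∧ 0 ≤ y ∧ band n p (x, y) = false := by
  simp only [downs, mem_filter, mem_product, mem_Ico]
  constructor
  · rintro ⟨⟨⟨hx, -⟩, hy, -⟩, h⟩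
    exact ⟨hx, hy, h⟩
  · rintro ⟨hx, hy, h⟩
    have := band_false h
    exact ⟨⟨⟨hx, this.2.2⟩, hy, this.2.1⟩, h⟩

theorem mem_downs_iff_of_nonneg {x y : ℤ} (hx : 0 ≤ x) (hy : 0 ≤ y) :
    (x, y) ∈ downs n p ↔ completion n p (x, y) = false := by
  simp [mem_downs_iff, completion_of_nonneg hy, hx, hy]

theorem isStart_completion_iff {x y : ℤ} :
    IsStart (completion n p) (x + 1, y) ↔ (x, y) ∈ rightMaximal (downs n p) := by
  simp only [IsStart, rightMaximal, mem_filter, add_sub_cancel_right]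
  constructor
  · rintro ⟨hr, h, hur⟩
    obtain ⟨hx, hy⟩ := nonneg_of_completion_rightMaximal h hr hur
    simp [mem_downs_iff_of_nonneg, hx, hy, h, hr, hur, add_nonneg]
  · rintro ⟨h, hr, hur⟩
    obtain ⟨hx, hy, -⟩ := mem_downs_iff.1 h
    simp_all [mem_downs_iff_of_nonneg, add_nonneg]

theorem numLeftDowns_le : numLeftDowns n p ≤ 2 * n - 1 := by
  have hsub : (Ico (-(n : ℤ)) n).filter (fun y => completion n p (0, y) = false) ⊆
      Ico (1 - (n : ℤ)) n := by
    intro y hy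
    simp only [mem_filter, mem_Ico] at hy ⊢
    refine ⟨?_, hy.1.2⟩
    by_contra hy'
    rw [show y = -n by omega, completion_of_neg (by omega), show (0 : ℤ) - -n = n by ring,
      unsupported_of_le le_rfl] at hy
    simp at hy
  have := card_le_card hsub
  simp only [Int.card_Ico] at this
  unfold numLeftDowns
  omega

theorem card_curveOrigins : #(curveOrigins n p) = width n p := by
  set L := (Icc (-(n : ℤ)) (n + numLeftDowns n p)).filter fun y => completion n p (0, y) = true
  have hL : #L = 2 * n + 1 := by
    have hdowns : (Icc (-(n : ℤ)) (n + numLeftDowns n p)).filter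
        (fun y => ¬completion n p (0, y) = true) =
        (Ico (-(n : ℤ)) n).filter fun y => completion n p (0, y) = false := by
      ext y
      simp only [mem_filter, mem_Icc, mem_Ico, Bool.not_eq_true]
      constructor
      · rintro ⟨⟨h₁, -⟩, h⟩
        exact ⟨⟨h₁, completion_false_lt h⟩, h⟩
      · rintro ⟨⟨h₁, h₂⟩, h⟩
        exact ⟨⟨h₁, by omega⟩, h⟩
    have := card_filter_add_card_filter_not (s := Icc (-(n : ℤ)) (n + numLeftDowns n p))
      (fun y => completion n p (0, y) = true)
    rw [hdowns, Int.card_Icc] at this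
    change #L + numLeftDowns n p = _ at this
    omega
  have hdisj : Disjoint (L.image fun y => ((0 : ℤ), y))
      ((rightMaximal (downs n p)).image fun c => (c.1 + 1, c.2)) := by
    simp only [disjoint_left, mem_image, not_exists, not_and]
    rintro _ ⟨y, -, rfl⟩ c hc he
    have := (mem_downs_iff.1 (mem_filter.1 hc).1).1
    simp only [Prod.mk.injEq] at he
    omega
  rw [curveOrigins, card_union_of_disjoint hdisj,
    card_image_of_injective _ fun _ _ h => (Prod.mk.inj h).2,
    card_image_of_injective _ fun c c' h => Prod.ext (by simpa using (Prod.mk.inj h).1)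
      (Prod.mk.inj h).2, hL, width, numStarts]

variable (hadm : LocallyAdmissible n p)
include hadm

theorem numStarts_le : numStarts n p ≤ 2 * n - 1 := by
  have hsub :
      leftMinimal (downs n p) ⊆ {0} ×ˢ Ico 0 (n : ℤ) ∪ Ico 1 (n : ℤ) ×ˢ {0} := by
    rintro ⟨x, y⟩ hc
    simp only [leftMinimal, mem_filter, mem_downs_iff, not_and] at hc
    obtain ⟨⟨hx, hy, h⟩, hl, hdl⟩ := hc
    have := band_false h
    simp only at this
    simp only [mem_union, mem_product, mem_singleton, mem_Ico]
    by_contra hc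
    rcases band_support hadm h (by omega) with h' | h'
    · exact absurd h' (by simpa using hl (by omega) hy)
    · exact absurd h' (by simpa using hdl (by omega) (by omega))
  have hvert : ∀ c ∈ downs n p, (c.1, c.2 + 1) ∉ downs n p := by
    rintro ⟨x, y⟩ hc
    simp only [mem_downs_iff] at hc ⊢
    simp [band_up hadm hc.2.2]
  calc numStarts n p
    _ ≤ #(leftMinimal (downs n p)) := card_rightMaximal_le_card_leftMinimal hvert
    _ ≤ #({0} ×ˢ Ico 0 (n : ℤ)) + #(Ico 1 (n : ℤ) ×ˢ {(0 : ℤ)}) :=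
      (card_le_card hsub).trans (card_union_le _ _)
    _ = 2 * n - 1 := by simp only [card_product, card_singleton, Int.card_Ico]; omega

theorem ncard_curvesThrough_completion :
    (curvesThrough (completion n p)
      ((fun s => ((0 : ℤ), -(n : ℤ)) + s) '' rectSet (width n p) (height n p))).ncard =
      width n p := by
  have hδ := completion_rules hadm
  refine (hδ.ncard_curvesThrough (x₀ := 0) (fun j hj => ?_) (fun j hj => ?_)
    (fun i hi hi' => ?_)).trans card_curveOrigins
  · simp only [mem_coe, curveOrigins, mem_union, mem_image, mem_filter, mem_Icc] at hj
    rw [mem_image_add_rectSet]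
    rcases hj with ⟨y, ⟨⟨h₁, h₂⟩, -⟩, rfl⟩ | ⟨c, hc, rfl⟩
    · simp only [width, height]; omega
    · obtain ⟨h₁, h₂, h₃, h₄, -⟩ := by
        simpa [downs, and_assoc] using (mem_filter.1 hc).1
      simp only [width, height]; omega
  · simp only [curveOrigins, mem_union, mem_image, mem_filter, mem_Icc] at hj
    rcases hj with ⟨y, ⟨-, hy⟩, rfl⟩ | ⟨c, hc, rfl⟩
    · exact ⟨hy, le_rfl, .inl rfl⟩
    · have hs := isStart_completion_iff.2 hc
      have := (mem_downs_iff.1 (mem_filter.1 hc).1).1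
      exact ⟨hs.1, by simp only; omega, .inr hs⟩
  · rw [mem_image_add_rectSet] at hi
    simp only [zero_add, height, width] at hi
    obtain ⟨j, c, hc, hj, hjx | hjs, hlo, hhi⟩ :=
      hδ.exists_iterate_eq_of_column_or_start (fun _ => completion_false_lt) 0 i.1.toNat i hi'
        (by omega)
    · refine ⟨j, ?_, c, hc⟩
      simp only [curveOrigins, mem_union, mem_image, mem_filter, mem_Icc]
      exact .inl ⟨j.2, ⟨⟨by omega, by omega⟩, by rwa [← hjx]⟩, Prod.ext hjx.symm rfl⟩
    · refine ⟨j, ?_, c, hc⟩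
      simp only [curveOrigins, mem_union, mem_image, mem_filter, mem_Icc]
      refine .inr ⟨(j.1 - 1, j.2), isStart_completion_iff.1 ?_, by simp⟩
      simpa using hjs

end Counting

end Delta

/-- Every locally admissible `n`-block of `Δ` extends to a rectangular pattern, of width
and height at most `5n`, appearing in a configuration of `Δ`, whose top and bottom rows
consist only of `→`-symbols and which is crossed by as many curves as it has columns. -/
theorem stmt12 (n : ℕ) (hn : 1 ≤ n) (p : Fin n × Fin n → Bool)
    (hadm : LocallyAdmissible n p) :
    ∃ δ : Config Bool, DeltaRules δ ∧
      ∃ (u : ℤ × ℤ) (w h : ℕ), 1 ≤ w ∧ 1 ≤ h ∧ w ≤ 5 * n ∧ h ≤ 5 * n ∧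
        (∃ t : ℤ × ℤ, (∀ v ∈ boxSet n, t + v ∈ rectSet w h) ∧
          ∀ v : Fin n × Fin n, δ (u + t + (((v.1 : ℕ) : ℤ), ((v.2 : ℕ) : ℤ))) = p v) ∧
        (∀ i : ℕ, i < w →
          δ (u + ((i : ℤ), 0)) = true ∧ δ (u + ((i : ℤ), (h : ℤ) - 1)) = true) ∧
        (curvesThrough δ ((fun s => u + s) '' rectSet w h)).ncard = w := by
  have hw := Delta.numStarts_le hadm
  have hh := Delta.numLeftDowns_le (p := p)
  refine ⟨Delta.completion n p, Delta.completion_rules hadm, (0, -n), Delta.width n p,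
    Delta.height n p,
    by simp only [Delta.width]; omega, by simp only [Delta.height]; omega,
    by simp only [Delta.width]; omega, by simp only [Delta.height]; omega,
    ⟨(0, n), ?_, fun v => ?_⟩, fun i hi => ⟨?_, ?_⟩,
    Delta.ncard_curvesThrough_completion hadm⟩
  · rintro ⟨x, y⟩ ⟨h₁, h₂, h₃, h₄⟩
    simp only [rectSet, Delta.width, Delta.height, Prod.mk_add_mk, Set.mem_ofPred_eq] at *
    omega
  · simp [Delta.completion_of_nonneg, Delta.band_natCast]
  · simp only [Prod.mk_add_mk, zero_add, add_zero]
    rw [Delta.completion_of_neg (by omega), Delta.unsupported_of_le (by omega)]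
    rfl
  · simp only [Prod.mk_add_mk, zero_add, Delta.height]
    exact Delta.completion_of_le (by omega)
end

section
/- For every nonempty Z²-subshift Z on a finite alphabet A and every integer r ≥ 1, the entropy of d^{(r)}_A(Z) satisfies the lower bound h(d^{(r)}_A(Z)) ≥ h(Z) + log₂(r+1)/r. -/
open Filter

noncomputable def entSeq {A : Type*} (X : Set (Config A)) (n : ℕ) : ℝ :=
  Real.logb 2 ((Lang X n).ncard) / (n : ℝ) ^ 2

/-- The alphabet of `d^{(r)}_A`: an `(A ∪ {blank})`-symbol and an arrow, together with a
counter in `ℤ/rℤ` and a color bit (both present exactly on `→`-positions). -/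
abbrev AlphaR (A : Type*) (r : ℕ) := (Option A × Bool) × Option (ZMod r) × Option Bool

def dArr {A : Type*} {r : ℕ} (z : Config (AlphaR A r)) : Config Bool :=
  fun u => (z u).1.2

def dCnt {A : Type*} {r : ℕ} (z : Config (AlphaR A r)) : Config (Option (ZMod r)) :=
  fun u => (z u).2.1

def dCol {A : Type*} {r : ℕ} (z : Config (AlphaR A r)) : Config (Option Bool) :=
  fun u => (z u).2.2

/-- The starting position of the length-`r` segment containing the position `u`. -/
def segStart {r : ℕ} (δ : Config Bool) (cnt : Config (Option (ZMod r))) (u : ℤ × ℤ) :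
    ℤ × ℤ :=
  (predPos δ)^[(cnt u).elim 0 ZMod.val] u

/-- The operator `d^{(r)}_A`: `d_A` together with a counter layer (incremented along each
curve, with downward shifts allowed only at counter value `r-1`, so curves are made of
length-`r` horizontal segments) and a random-colors layer (on each segment a word of the
form `1^j 0^(r-j)`, equal to `0^r` on segments not surrounded by other segments). -/
def drOp {A : Type*} (r : ℕ) (X : Set (Config A)) : Set (Config (AlphaR A r)) :=
  {z | DeltaRules (dArr z) ∧
    (∀ u : ℤ × ℤ, dArr z u = true ↔ (z u).1.1 ≠ none) ∧
    (∀ u : ℤ × ℤ, dArr z u = true ↔ dCnt z u ≠ none) ∧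
    (∀ u : ℤ × ℤ, dArr z u = true ↔ dCol z u ≠ none) ∧
    (∀ u : ℤ × ℤ, dArr z u = true → ∀ c : ZMod r, dCnt z u = some c →
      dCnt z (succPos (dArr z) u) = some (c + 1)) ∧
    (∀ u : ℤ × ℤ, dArr z u = true → dArr z (u + (1, 0)) = false →
      dCnt z u = some (-1 : ZMod r)) ∧
    (∀ u : ℤ × ℤ, dArr z u = true → dCnt z u ≠ some (-1 : ZMod r) →
      dCol z u = some false → dCol z (succPos (dArr z) u) = some false) ∧
    (∀ u : ℤ × ℤ, dArr z u = true →
      (¬ ∀ j : ℕ, j < r →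
        dArr z ((succPos (dArr z))^[j] (segStart (dArr z) (dCnt z) u) + (0, 1)) = true ∧
        dArr z ((succPos (dArr z))^[j] (segStart (dArr z) (dCnt z) u) + (0, -1)) = true) →
      ∀ j : ℕ, j < r →
        dCol z ((succPos (dArr z))^[j] (segStart (dArr z) (dCnt z) u)) = some false) ∧
    ∃ x ∈ X, ∀ i j : ℤ, (z (curvePos (dArr z) j i)).1.1 = some (x (i, j))}

/-! ### Auxiliary constructions -/

section Aux

/-- The all-`→` arrow configuration. -/
def deltaTrue : Config Bool := fun _ => true

@[simp] lemma succPos_deltaTrue (u : ℤ × ℤ) : succPos deltaTrue u = u + (1, 0) := by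
  simp [succPos, deltaTrue]

@[simp] lemma predPos_deltaTrue (u : ℤ × ℤ) : predPos deltaTrue u = u + (-1, 0) := by
  simp [predPos, deltaTrue]

lemma succPos_deltaTrue_iter (k : ℕ) (u : ℤ × ℤ) :
    (succPos deltaTrue)^[k] u = u + ((k : ℤ), 0) := by
  induction k with
  | zero => simp
  | succ k ih =>
      rw [Function.iterate_succ_apply', ih, succPos_deltaTrue]
      simp [Prod.ext_iff]; ring_nf

lemma predPos_deltaTrue_iter (k : ℕ) (u : ℤ × ℤ) :
    (predPos deltaTrue)^[k] u = u + (-(k : ℤ), 0) := by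
  induction k with
  | zero => simp
  | succ k ih =>
      rw [Function.iterate_succ_apply', ih, predPos_deltaTrue]
      simp [Prod.ext_iff]; ring_nf

@[simp] lemma colEnum_deltaTrue (k : ℤ) : colEnum deltaTrue k = k := by
  have hu : ∀ m : ℕ, colUp deltaTrue m = m := by
    intro m; induction m with
    | zero => simp [colUp, colBase, deltaTrue]
    | succ m ih => simp [colUp, ih, deltaTrue]
  have hd : ∀ m : ℕ, colDown deltaTrue m = -(m : ℤ) := by
    intro m; induction m with
    | zero => simp [colDown, colBase, deltaTrue]
    | succ m ih => simp [colDown, ih, deltaTrue]; ring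
  unfold colEnum
  by_cases h : 0 ≤ k
  · simp [h, hu, Int.toNat_of_nonneg h]
  · simp [h, hd]
    omega

lemma curvePos_deltaTrue (k i : ℤ) : curvePos deltaTrue k i = (i, k) := by
  unfold curvePos
  by_cases h : 0 ≤ i
  · rw [if_pos h, succPos_deltaTrue_iter]
    simp [Int.toNat_of_nonneg h, Prod.ext_iff]
  · rw [if_neg h, predPos_deltaTrue_iter]
    simp [Prod.ext_iff]
    omega

end Aux

section Construct

variable {A : Type}

/-- The configuration of `drOp r Z` built from `x : Config A` and a choice of colors. -/
def zConf (r : ℕ) (x : Config A) (T : ℤ × ℤ → ℕ) : Config (AlphaR A r) :=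
  fun u => ((some (x u), true), some ((u.1 : ZMod r)),
    some (decide (u.1 % (r : ℤ) < (T (u.1 / (r : ℤ), u.2) : ℤ))))

@[simp] lemma dArr_zConf (r : ℕ) (x : Config A) (T : ℤ × ℤ → ℕ) :
    dArr (zConf r x T) = deltaTrue := rfl

@[simp] lemma dCnt_zConf (r : ℕ) (x : Config A) (T : ℤ × ℤ → ℕ) (u : ℤ × ℤ) :
    dCnt (zConf r x T) u = some ((u.1 : ZMod r)) := rfl

@[simp] lemma dCol_zConf (r : ℕ) (x : Config A) (T : ℤ × ℤ → ℕ) (u : ℤ × ℤ) :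
    dCol (zConf r x T) u = some (decide (u.1 % (r : ℤ) < (T (u.1 / (r : ℤ), u.2) : ℤ))) := rfl

lemma zConf_mem {Z : Set (Config A)} {x : Config A} (hx : x ∈ Z) {r : ℕ} (hr : 1 ≤ r)
    (T : ℤ × ℤ → ℕ) : zConf r x T ∈ drOp r Z := by
  refine ⟨?_, ?_, ?_, ?_, ?_, ?_, ?_, ?_, ?_⟩
  · intro u
    constructor
    · rintro ⟨h, -⟩; simp [dArr, zConf] at h
    · rintro ⟨-, -, -, h⟩; simp [dArr, zConf] at h
  · intro u; simp [dArr, zConf]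
  · intro u; simp [dArr, zConf, dCnt]
  · intro u; simp [dArr, zConf, dCol]
  · intro u _ c hc
    rw [dArr_zConf, succPos_deltaTrue]
    rw [dCnt_zConf] at hc ⊢
    simp only [Option.some_inj] at hc ⊢
    subst hc
    have hfst : (u + ((1 : ℤ), (0 : ℤ))).1 = u.1 + 1 := rfl
    rw [hfst]
    push_cast
    ring
  · intro u _ h
    exfalso; simp [dArr, zConf] at h
  · intro u _ hne hcol
    rw [dArr_zConf, succPos_deltaTrue]
    rw [dCnt_zConf] at hne
    rw [dCol_zConf] at hcol ⊢
    simp only [Option.some_inj, decide_eq_false_iff_not, not_lt] at hcol ⊢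
    -- from hne : ¬ some (u.1 : ZMod r) = some (-1), u.1 % r ≠ r - 1
    have hdvd : ¬ ((r : ℤ) ∣ u.1 + 1) := by
      intro hd
      apply hne
      have : ((u.1 + 1 : ℤ) : ZMod r) = 0 := by
        rw [ZMod.intCast_zmod_eq_zero_iff_dvd]; exact hd
      push_cast at this
      rw [Option.some_inj]
      linear_combination this
    have hrpos : (0 : ℤ) < (r : ℤ) := by exact_mod_cast hr
    have hmod := Int.emod_nonneg u.1 (by omega : (r : ℤ) ≠ 0)
    have hmod2 := Int.emod_lt_of_pos u.1 hrpos
    have hne2 : u.1 % (r : ℤ) ≠ (r : ℤ) - 1 := by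
      intro h
      apply hdvd
      have h2 := Int.mul_ediv_add_emod u.1 (r : ℤ)
      have h3 : (r : ℤ) * (u.1 / (r : ℤ) + 1) = (r : ℤ) * (u.1 / (r : ℤ)) + r := by ring
      exact ⟨u.1 / (r : ℤ) + 1, by omega⟩
    have key₁ : (u.1 + 1) % (r : ℤ) = u.1 % (r : ℤ) + 1 := by
      have h1 : u.1 + 1 = (u.1 % (r : ℤ) + 1) + (r : ℤ) * (u.1 / (r : ℤ)) := by
        have := Int.mul_ediv_add_emod u.1 (r : ℤ); omega
      rw [h1, Int.add_mul_emod_self_left, Int.emod_eq_of_lt (by omega) (by omega)]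
    have key₂ : (u.1 + 1) / (r : ℤ) = u.1 / (r : ℤ) := by
      have h1 : u.1 + 1 = (u.1 % (r : ℤ) + 1) + (r : ℤ) * (u.1 / (r : ℤ)) := by
        have := Int.mul_ediv_add_emod u.1 (r : ℤ); omega
      rw [h1, Int.add_mul_ediv_left _ _ (by omega : (r : ℤ) ≠ 0),
        Int.ediv_eq_zero_of_lt (by omega) (by omega), zero_add]
    have hfst : (u + ((1 : ℤ), (0 : ℤ))).1 = u.1 + 1 := rfl
    have hsnd : (u + ((1 : ℤ), (0 : ℤ))).2 = u.2 := by
      show u.2 + 0 = u.2; ring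
    rw [hfst, hsnd, key₁, key₂]
    omega
  · intro u _ habs
    exfalso
    apply habs
    intro j _
    exact ⟨rfl, rfl⟩
  · refine ⟨x, hx, fun i j => ?_⟩
    rw [dArr_zConf, curvePos_deltaTrue]
    rfl

end Construct

section Count

variable {A : Type} [Fintype A]

omit [Fintype A] in
lemma lang_mem_at_zero {Z : Set (Config A)} [TopologicalSpace A] (hZ : IsSubshift Z)
    {n : ℕ} {p : Fin n × Fin n → A} (hp : p ∈ Lang Z n) :
    ∃ x ∈ Z, blockAt x 0 n = p := by
  obtain ⟨x, hx, u, hxu⟩ := hp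
  refine ⟨shiftC u x, hZ.2 u x hx, ?_⟩
  funext v
  rw [← hxu]
  show x (0 + _ + u) = x (u + _)
  rw [zero_add, add_comm]

/-- Extension of a finite family of color choices to all of `ℤ × ℤ`. -/
def Tfun (n r : ℕ) (t : Fin n × Fin (n / r) → Fin (r + 1)) : ℤ × ℤ → ℕ :=
  fun qj => if h : 0 ≤ qj.1 ∧ qj.1 < ((n / r : ℕ) : ℤ) ∧ 0 ≤ qj.2 ∧ qj.2 < (n : ℤ)
    then (t (⟨qj.2.toNat, by omega⟩, ⟨qj.1.toNat, by omega⟩) : ℕ) else 0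

lemma card_bound {Z : Set (Config A)} [TopologicalSpace A] (hZ : IsSubshift Z)
    {r : ℕ} (hr : 1 ≤ r) (n : ℕ) :
    (Lang Z n).ncard * (r + 1) ^ ((n / r) * n) ≤ (Lang (drOp r Z) n).ncard := by
  haveI : NeZero r := ⟨by omega⟩
  classical
  -- the injection
  set M := n / r with hM
  have hchoice : ∀ p : ↥(Lang Z n), ∃ x ∈ Z, blockAt x 0 n = (p : Fin n × Fin n → A) :=
    fun p => lang_mem_at_zero hZ p.2
  choose xp hxpZ hxpblock using hchoice
  let e : ↥(Lang Z n) × (Fin n × Fin M → Fin (r + 1)) → ↥(Lang (drOp r Z) n) :=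
    fun pt => ⟨blockAt (zConf r (xp pt.1) (Tfun n r pt.2)) 0 n,
      ⟨_, zConf_mem (hxpZ pt.1) hr _, 0, rfl⟩⟩
  have hinj : Function.Injective e := by
    rintro ⟨p, t⟩ ⟨p', t'⟩ hee
    have heq : blockAt (zConf r (xp p) (Tfun n r t)) 0 n
        = blockAt (zConf r (xp p') (Tfun n r t')) 0 n := congrArg Subtype.val hee
    have heval : ∀ v : Fin n × Fin n,
        zConf r (xp p) (Tfun n r t) (((v.1 : ℕ) : ℤ), ((v.2 : ℕ) : ℤ))
        = zConf r (xp p') (Tfun n r t') (((v.1 : ℕ) : ℤ), ((v.2 : ℕ) : ℤ)) := by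
      intro v
      have := congrFun heq v
      simpa [blockAt, zero_add] using this
    have hpp : p = p' := by
      ext v
      have h1 := congrArg (fun w => w.1.1) (heval v)
      simp only [zConf, Option.some_inj] at h1
      have h2 : (p : Fin n × Fin n → A) v
          = xp p (0 + (((v.1 : ℕ) : ℤ), ((v.2 : ℕ) : ℤ))) := (congrFun (hxpblock p) v).symm
      have h3 : (p' : Fin n × Fin n → A) v
          = xp p' (0 + (((v.1 : ℕ) : ℤ), ((v.2 : ℕ) : ℤ))) := (congrFun (hxpblock p') v).symm
      rw [zero_add] at h2 h3
      rw [Subtype.ext_iff] at *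
      rw [h2, h3, h1]
    have htt : t = t' := by
      funext jq
      obtain ⟨j, q⟩ := jq
      -- compare color bits along the segment `[q*r, q*r + r)` in row `j`
      have hbit : ∀ s : ℕ, s < r → (s < (t (j, q) : ℕ) ↔ s < (t' (j, q) : ℕ)) := by
        intro s hs
        have hqr : (q : ℕ) * r + r ≤ n := by
          have h1 : (q : ℕ) + 1 ≤ n / r := q.2
          calc (q : ℕ) * r + r = ((q : ℕ) + 1) * r := by ring
          _ ≤ (n / r) * r := Nat.mul_le_mul_right r h1
          _ ≤ n := Nat.div_mul_le_self n r
        have hin : (q : ℕ) * r + s < n := by omega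
        have h1 := congrArg (fun w => w.2.2) (heval (⟨(q : ℕ) * r + s, hin⟩, j))
        simp only [zConf, Option.some_inj] at h1
        -- compute `i % r = s` and `i / r = q` for `i = q*r + s`
        have hrne : ((r : ℤ)) ≠ 0 := by exact_mod_cast (by omega : r ≠ 0)
        have hiz : (((q : ℕ) * r + s : ℕ) : ℤ) = (s : ℤ) + (r : ℤ) * (q : ℕ) := by
          push_cast; ring
        have hmod : (((q : ℕ) * r + s : ℕ) : ℤ) % (r : ℤ) = (s : ℤ) := by
          rw [hiz, Int.add_mul_emod_self_left, Int.emod_eq_of_lt (by omega) (by exact_mod_cast hs)]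
        have hdiv : (((q : ℕ) * r + s : ℕ) : ℤ) / (r : ℤ) = ((q : ℕ) : ℤ) := by
          rw [hiz, Int.add_mul_ediv_left _ _ hrne,
            Int.ediv_eq_zero_of_lt (by omega) (by exact_mod_cast hs), zero_add]
        rw [hmod, hdiv] at h1
        have hTq : ∀ tt : Fin n × Fin M → Fin (r + 1),
            Tfun n r tt (((q : ℕ) : ℤ), ((j : ℕ) : ℤ)) = (tt (j, q) : ℕ) := by
          intro tt
          have hcond : (0 : ℤ) ≤ ((q : ℕ) : ℤ) ∧ ((q : ℕ) : ℤ) < ((n / r : ℕ) : ℤ) ∧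
              (0 : ℤ) ≤ ((j : ℕ) : ℤ) ∧ ((j : ℕ) : ℤ) < (n : ℤ) := by
            refine ⟨by positivity, ?_, by positivity, by exact_mod_cast j.2⟩
            exact_mod_cast q.2
          rw [Tfun, dif_pos hcond]
          simp
        rw [hTq t, hTq t'] at h1
        have h5 := decide_eq_decide.mp h1
        exact_mod_cast h5
      have hb1 : (t (j, q) : ℕ) ≤ r := by omega
      have hb2 : (t' (j, q) : ℕ) ≤ r := by omega
      have : (t (j, q) : ℕ) = (t' (j, q) : ℕ) := by
        by_contra hne
        rcases Nat.lt_or_ge (t (j, q) : ℕ) (t' (j, q) : ℕ) with h | h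
        · have := hbit (t (j, q) : ℕ) (by omega)
          omega
        · have := hbit (t' (j, q) : ℕ) (by omega)
          omega
      exact Fin.ext this
    rw [hpp, htt]
  have hfin : (Lang (drOp r Z) n).Finite := Set.toFinite _
  have hcard := Nat.card_le_card_of_injective e hinj
  rw [Nat.card_prod] at hcard
  rw [Nat.card_coe_set_eq, Nat.card_coe_set_eq] at hcard
  have hpow : Nat.card (Fin n × Fin M → Fin (r + 1)) = (r + 1) ^ (M * n) := by
    rw [Nat.card_eq_fintype_card, Fintype.card_fun]
    simp [mul_comm]
  rw [hpow] at hcard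
  exact hcard
end Count

section Entropy

lemma entSeq_nonneg {B : Type*} (X : Set (Config B)) (n : ℕ) : 0 ≤ entSeq X n := by
  unfold entSeq
  apply div_nonneg _ (by positivity)
  rcases Nat.eq_zero_or_pos (Lang X n).ncard with h | h
  · simp [h]
  · exact Real.logb_nonneg one_lt_two (by exact_mod_cast h)

lemma ent_ineq {A : Type} [Fintype A] [TopologicalSpace A] {Z : Set (Config A)}
    (hZ : IsSubshift Z) (hne : Z.Nonempty) {r : ℕ} (hr : 1 ≤ r) (n : ℕ) (hn : 1 ≤ n) :
    entSeq Z n + (((n / r) * n : ℕ) : ℝ) / (n : ℝ) ^ 2 * Real.logb 2 ((r : ℝ) + 1)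
      ≤ entSeq (drOp r Z) n := by
  obtain ⟨x, hx⟩ := hne
  have hne1 : (Lang Z n).Nonempty := ⟨blockAt x 0 n, x, hx, 0, rfl⟩
  have hN1 : 1 ≤ (Lang Z n).ncard := (Set.ncard_pos (Set.toFinite _)).mpr hne1
  have hcard := card_bound hZ hr n
  set N1 := (Lang Z n).ncard
  set K := (r + 1) ^ ((n / r) * n)
  set N2 := (Lang (drOp r Z) n).ncard
  have hK : 1 ≤ K := Nat.one_le_pow _ _ (by omega)
  have hlog : Real.logb 2 ((N1 : ℝ) * (K : ℝ)) ≤ Real.logb 2 (N2 : ℝ) := by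
    apply Real.logb_le_logb_of_le one_lt_two (by positivity)
    exact_mod_cast hcard
  rw [Real.logb_mul (by positivity) (by positivity)] at hlog
  have hKlog : Real.logb 2 (K : ℝ) = (((n / r) * n : ℕ) : ℝ) * Real.logb 2 ((r : ℝ) + 1) := by
    have : ((K : ℕ) : ℝ) = ((r : ℝ) + 1) ^ ((n / r) * n) := by
      rw [show K = (r + 1) ^ ((n / r) * n) from rfl]; push_cast; ring
    rw [this, Real.logb_pow]
  rw [hKlog] at hlog
  unfold entSeq
  have hn2 : (0 : ℝ) < (n : ℝ) ^ 2 := by positivity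
  calc Real.logb 2 (N1 : ℝ) / (n : ℝ) ^ 2
        + (((n / r) * n : ℕ) : ℝ) / (n : ℝ) ^ 2 * Real.logb 2 ((r : ℝ) + 1)
      = (Real.logb 2 (N1 : ℝ)
          + (((n / r) * n : ℕ) : ℝ) * Real.logb 2 ((r : ℝ) + 1)) / (n : ℝ) ^ 2 := by
        ring
    _ ≤ Real.logb 2 (N2 : ℝ) / (n : ℝ) ^ 2 := by gcongr

end Entropy

section Limits

lemma q_tendsto {r : ℕ} (hr : 1 ≤ r) :
    Tendsto (fun n : ℕ => (((n / r) * n : ℕ) : ℝ) / (n : ℝ) ^ 2) atTop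
      (nhds (1 / (r : ℝ))) := by
  have hrR : (0 : ℝ) < (r : ℝ) := by exact_mod_cast hr
  have h0 : Tendsto (fun n : ℕ => ((n % r : ℕ) : ℝ) / (n : ℝ)) atTop (nhds 0) := by
    apply squeeze_zero (fun n => by positivity) (g := fun n : ℕ => (r : ℝ) / (n : ℝ))
      (fun n => ?_) (tendsto_const_div_atTop_nhds_zero_nat (r : ℝ))
    rcases Nat.eq_zero_or_pos n with h | h
    · simp [h]
    · have h1 : ((n % r : ℕ) : ℝ) ≤ (r : ℝ) := by
        have := Nat.mod_lt n (show 0 < r by omega)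
        exact_mod_cast this.le
      show ((n % r : ℕ) : ℝ) / (n : ℝ) ≤ (r : ℝ) / (n : ℝ)
      gcongr
  have key : Tendsto (fun n : ℕ => (1 - ((n % r : ℕ) : ℝ) / (n : ℝ)) / (r : ℝ)) atTop
      (nhds ((1 - 0) / (r : ℝ))) := (tendsto_const_nhds.sub h0).div_const _
  rw [sub_zero] at key
  apply key.congr'
  filter_upwards [eventually_ge_atTop 1] with n hn
  have hnR : (0 : ℝ) < (n : ℝ) := by exact_mod_cast hn
  have hid : (r : ℝ) * ((n / r : ℕ) : ℝ) + ((n % r : ℕ) : ℝ) = (n : ℝ) := by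
    exact_mod_cast congrArg (Nat.cast : ℕ → ℝ) (Nat.div_add_mod n r)
  push_cast
  field_simp
  ring_nf
  nlinarith [hid]

end Limits

lemma entSeq_le {B : Type*} [Fintype B] [Nonempty B] (X : Set (Config B)) (n : ℕ) :
    entSeq X n ≤ Real.logb 2 (Fintype.card B) := by
  have hB : 1 ≤ Fintype.card B := Fintype.card_pos
  have hBR : (0 : ℝ) ≤ Real.logb 2 (Fintype.card B) :=
    Real.logb_nonneg one_lt_two (by exact_mod_cast hB)
  unfold entSeq
  rcases Nat.eq_zero_or_pos n with h | h
  · simp only [h]; simpa using hBR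
  rcases Nat.eq_zero_or_pos (Lang X n).ncard with h0 | h0
  · simp only [h0]; simp only [Nat.cast_zero, Real.logb_zero, zero_div]; positivity
  have hle : (Lang X n).ncard ≤ Fintype.card B ^ (n * n) := by
    classical
    calc (Lang X n).ncard ≤ (Set.univ : Set (Fin n × Fin n → B)).ncard :=
          Set.ncard_le_ncard (Set.subset_univ _) Set.finite_univ
      _ = Fintype.card B ^ (n * n) := by
          rw [Set.ncard_univ, Nat.card_eq_fintype_card, Fintype.card_fun]
          simp
  rw [div_le_iff₀ (by positivity)]
  calc Real.logb 2 ((Lang X n).ncard : ℝ)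
      ≤ Real.logb 2 ((Fintype.card B : ℝ) ^ (n * n)) := by
        apply Real.logb_le_logb_of_le one_lt_two (by exact_mod_cast h0)
        exact_mod_cast hle
    _ = (n * n : ℕ) * Real.logb 2 (Fintype.card B) := by
        rw [Real.logb_pow]
    _ ≤ Real.logb 2 (Fintype.card B) * (n : ℝ) ^ 2 := by
        push_cast; nlinarith [hBR]

/-- For every nonempty Z²-subshift `Z` on a finite alphabet and every `r ≥ 1`,
`h(d^{(r)}_A(Z)) ≥ h(Z) + log₂(r+1)/r`. -/
theorem stmt16 {A : Type} [Fintype A] [TopologicalSpace A] [DiscreteTopology A]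
    (Z : Set (Config A)) (hZ : IsSubshift Z) (hne : Z.Nonempty)
    (r : ℕ) (hr : 1 ≤ r) (h1 : ℝ)
    (hent : Tendsto (entSeq Z) atTop (nhds h1)) :
    h1 + Real.logb 2 ((r : ℝ) + 1) / (r : ℝ) ≤
      Filter.liminf (entSeq (drOp r Z)) atTop := by
  set c := Real.logb 2 ((r : ℝ) + 1) with hc
  set g : ℕ → ℝ := fun n =>
    entSeq Z n + (((n / r) * n : ℕ) : ℝ) / (n : ℝ) ^ 2 * c with hgdef
  have hg : Tendsto g atTop (nhds (h1 + (1 / (r : ℝ)) * c)) :=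
    hent.add ((q_tendsto hr).mul_const c)
  have heq : h1 + c / (r : ℝ) = h1 + (1 / (r : ℝ)) * c := by ring
  rw [heq, ← hg.liminf_eq]
  haveI : NeZero r := ⟨by omega⟩
  apply Filter.liminf_le_liminf
  · filter_upwards [eventually_ge_atTop 1] with n hn
    exact ent_ineq hZ hne hr n hn
  · exact hg.isBoundedUnder_ge
  · exact (Filter.isBoundedUnder_of
      ⟨Real.logb 2 (Fintype.card (AlphaR A r)), fun n => entSeq_le _ _⟩).isCoboundedUnder_ge
end

section
/- Let X_Linear be the Z²-SFT on the alphabet {□, ■} defined by the three forbidden patterns: (a) ■ at positions (0,0) and (0,1) with □ at (−1,0); (b) ■ at positions (0,0) and (0,1) with □ at (1,0); (c) ■ at positions (−1,0), (0,0), (1,0) with □ at (0,1). Then X_Linear is linearly block gluing, and this is sharp: for every nondecreasing f : ℕ → ℕ with f(n) ∈ o(n) (for every ε > 0 there is n₀ with f(n) ≤ ε·n for all n ≥ n₀), X_Linear is not f-block gluing. -/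
open Filter

/-- The SFT `X_Linear` on `{□,■}` (`true` = `■`): forbidden patterns are
`■` at `(0,0),(0,1)` with `□` at `(-1,0)`; `■` at `(0,0),(0,1)` with `□` at `(1,0)`;
and `■` at `(-1,0),(0,0),(1,0)` with `□` at `(0,1)`. -/
def XLinear : Set (Config Bool) :=
  {x | ∀ u : ℤ × ℤ,
    ¬(x u = true ∧ x (u + (0, 1)) = true ∧ x (u + (-1, 0)) = false) ∧
    ¬(x u = true ∧ x (u + (0, 1)) = true ∧ x (u + (1, 0)) = false) ∧
    ¬(x (u + (-1, 0)) = true ∧ x u = true ∧ x (u + (1, 0)) = true ∧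
      x (u + (0, 1)) = false)}

namespace Stmt18Aux

lemma pt (a b c d : ℤ) : ((a, b) : ℤ × ℤ) + (c, d) = (a + c, b + d) := rfl

lemma e01 (a b : ℤ) : ((a, b) : ℤ × ℤ) + (0, 1) = (a, b + 1) := by
  rw [pt]; norm_num

lemma em10 (a b : ℤ) : ((a, b) : ℤ × ℤ) + (-1, 0) = (a - 1, b) := by
  rw [pt, Prod.mk.injEq]; exact ⟨by ring, by ring⟩

lemma e10 (a b : ℤ) : ((a, b) : ℤ × ℤ) + (1, 0) = (a + 1, b) := by
  rw [pt]; norm_num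

lemma xl_left {x : Config Bool} (hx : x ∈ XLinear) {a b : ℤ}
    (h1 : x (a, b) = true) (h2 : x (a, b + 1) = true) : x (a - 1, b) = true := by
  obtain ⟨h, -, -⟩ := hx (a, b)
  rw [e01, em10] at h
  cases hb : x (a - 1, b) with
  | false => exact absurd ⟨h1, h2, hb⟩ h
  | true => rfl

lemma xl_right {x : Config Bool} (hx : x ∈ XLinear) {a b : ℤ}
    (h1 : x (a, b) = true) (h2 : x (a, b + 1) = true) : x (a + 1, b) = true := by
  obtain ⟨-, h, -⟩ := hx (a, b)
  rw [e01, e10] at h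
  cases hb : x (a + 1, b) with
  | false => exact absurd ⟨h1, h2, hb⟩ h
  | true => rfl

lemma xl_up {x : Config Bool} (hx : x ∈ XLinear) {a b : ℤ}
    (h1 : x (a - 1, b) = true) (h2 : x (a, b) = true) (h3 : x (a + 1, b) = true) :
    x (a, b + 1) = true := by
  obtain ⟨-, -, h⟩ := hx (a, b)
  rw [e01, em10, e10] at h
  cases hb : x (a, b + 1) with
  | false => exact absurd ⟨h1, h2, h3, hb⟩ h
  | true => rfl

lemma shift_mem {x : Config Bool} (hx : x ∈ XLinear) (w : ℤ × ℤ) :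
    shiftC w x ∈ XLinear := by
  intro u
  have e : ∀ d : ℤ × ℤ, u + d + w = u + w + d := fun d => by ring
  simpa only [shiftC, e] using hx (u + w)

lemma blockAt_shift (x : Config Bool) (w t : ℤ × ℤ) (n : ℕ) :
    blockAt (shiftC (w - t) x) t n = blockAt x w n := by
  funext v
  simp only [blockAt, shiftC]
  congr 1
  ring

/-- The closure of a set of black cells under the local rules forced by `XLinear`. -/
inductive Cl (B : Set (ℤ × ℤ)) : ℤ × ℤ → Prop
  | base {v : ℤ × ℤ} : v ∈ B → Cl B v
  | left {a b : ℤ} : Cl B (a, b) → Cl B (a, b + 1) → Cl B (a - 1, b)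
  | right {a b : ℤ} : Cl B (a, b) → Cl B (a, b + 1) → Cl B (a + 1, b)
  | up {a b : ℤ} : Cl B (a - 1, b) → Cl B (a, b) → Cl B (a + 1, b) → Cl B (a, b + 1)

lemma cl_le {x : Config Bool} (hx : x ∈ XLinear) {B : Set (ℤ × ℤ)}
    (hB : ∀ b ∈ B, x b = true) : ∀ v, Cl B v → x v = true := by
  intro v h
  induction h with
  | base h => exact hB _ h
  | left _ _ ih1 ih2 => exact xl_left hx ih1 ih2
  | right _ _ ih1 ih2 => exact xl_right hx ih1 ih2
  | up _ _ _ ih1 ih2 ih3 => exact xl_up hx ih1 ih2 ih3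

/-- The closure of a set contained in an `n × n` window with corner `w` stays in a
pyramid above the window. -/
lemma cl_pyr {B : Set (ℤ × ℤ)} {w : ℤ × ℤ} {n : ℕ}
    (hB : ∀ b ∈ B, w.1 ≤ b.1 ∧ b.1 < w.1 + n ∧ w.2 ≤ b.2 ∧ b.2 < w.2 + n) :
    ∀ v, Cl B v →
      w.2 ≤ v.2 ∧ w.1 - n + (v.2 - w.2) ≤ v.1 ∧ v.1 + (v.2 - w.2) ≤ w.1 + 2 * n := by
  intro v h
  induction h with
  | base h => have := hB _ h; omega
  | left _ _ ih1 ih2 => dsimp only at ih1 ih2 ⊢; omega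
  | right _ _ ih1 ih2 => dsimp only at ih1 ih2 ⊢; omega
  | up _ _ _ ih1 ih2 ih3 => dsimp only at ih1 ih2 ih3 ⊢; omega

lemma cl_box {B : Set (ℤ × ℤ)} {w : ℤ × ℤ} {n : ℕ}
    (hB : ∀ b ∈ B, w.1 ≤ b.1 ∧ b.1 < w.1 + n ∧ w.2 ≤ b.2 ∧ b.2 < w.2 + n) :
    ∀ v, Cl B v →
      w.1 - 2 * n ≤ v.1 ∧ v.1 ≤ w.1 + 2 * n ∧ w.2 ≤ v.2 ∧ v.2 ≤ w.2 + 2 * n := by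
  intro v h
  have := cl_pyr hB v h
  omega

/-- The all-white configuration is in `XLinear`. -/
lemma white_mem : (fun _ => false : Config Bool) ∈ XLinear := by
  intro u
  simp

/-- The all-black configuration is in `XLinear`. -/
lemma black_mem : (fun _ => true : Config Bool) ∈ XLinear := by
  intro u
  simp

/-- Main gluing construction. -/
lemma glue {n : ℕ} (hn : 1 ≤ n) {p q : Fin n × Fin n → Bool}
    (hp : p ∈ Lang XLinear n) (hq : q ∈ Lang XLinear n) (u : ℤ × ℤ)
    (hu : 8 * (n : ℤ) ≤ normInf u) : u ∈ gluingSet XLinear p q := by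
  classical
  obtain ⟨xq0, hxq0, wq, hwq⟩ := hq
  obtain ⟨xp0, hxp0, wp, hwp⟩ := hp
  set x₁ : Config Bool := shiftC (wq - 0) xq0 with hx₁def
  set x₂ : Config Bool := shiftC (wp - u) xp0 with hx₂def
  have hx₁ : x₁ ∈ XLinear := shift_mem hxq0 _
  have hx₂ : x₂ ∈ XLinear := shift_mem hxp0 _
  have hb₁ : blockAt x₁ 0 n = q := by rw [hx₁def, blockAt_shift]; exact hwq
  have hb₂ : blockAt x₂ u n = p := by rw [hx₂def, blockAt_shift]; exact hwp
  set B₁ : Set (ℤ × ℤ) :=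
    {z | (0 ≤ z.1 ∧ z.1 < (n : ℤ) ∧ 0 ≤ z.2 ∧ z.2 < (n : ℤ)) ∧ x₁ z = true} with hB₁def
  set B₂ : Set (ℤ × ℤ) :=
    {z | (u.1 ≤ z.1 ∧ z.1 < u.1 + n ∧ u.2 ≤ z.2 ∧ z.2 < u.2 + n) ∧ x₂ z = true} with hB₂def
  have box₁ : ∀ v, Cl B₁ v →
      (0 : ℤ) - 2 * n ≤ v.1 ∧ v.1 ≤ (0 : ℤ) + 2 * n ∧ (0 : ℤ) ≤ v.2 ∧ v.2 ≤ (0 : ℤ) + 2 * n := by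
    have := cl_box (B := B₁) (w := ((0 : ℤ), (0 : ℤ))) (n := n) ?_
    · exact this
    · intro b hb
      obtain ⟨hb, -⟩ := hb
      dsimp only
      omega
  have box₂ : ∀ v, Cl B₂ v →
      u.1 - 2 * n ≤ v.1 ∧ v.1 ≤ u.1 + 2 * n ∧ u.2 ≤ v.2 ∧ v.2 ≤ u.2 + 2 * n := by
    have := cl_box (B := B₂) (w := u) (n := n) ?_
    · exact this
    · intro b hb
      obtain ⟨hb, -⟩ := hb
      omega
  have husplit : 8 * (n : ℤ) ≤ u.1 ∨ u.1 ≤ -(8 * n) ∨ 8 * (n : ℤ) ≤ u.2 ∨ u.2 ≤ -(8 * n) := by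
    unfold normInf at hu
    rcases le_max_iff.mp hu with h | h
    · rcases abs_cases u.1 with ⟨h', -⟩ | ⟨h', -⟩ <;> omega
    · rcases abs_cases u.2 with ⟨h', -⟩ | ⟨h', -⟩ <;> omega
  have sep : ∀ a1 a2 b1 b2 : ℤ, Cl B₁ (a1, a2) → Cl B₂ (b1, b2) →
      3 ≤ b1 - a1 ∨ 3 ≤ a1 - b1 ∨ 3 ≤ b2 - a2 ∨ 3 ≤ a2 - b2 := by
    intro a1 a2 b1 b2 ha hb
    have h1 := box₁ _ ha
    have h2 := box₂ _ hb
    dsimp only at h1 h2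
    omega
  set D : ℤ × ℤ → Prop := fun v => Cl B₁ v ∨ Cl B₂ v with hDdef
  set y : Config Bool := fun v => decide (D v) with hydef
  have yT : ∀ v, D v → y v = true := fun v h => by
    rw [hydef]; exact decide_eq_true h
  have yT' : ∀ v, y v = true → D v := fun v h => by
    rw [hydef] at h; exact of_decide_eq_true h
  have yF : ∀ v, y v = false → ¬ D v := fun v h => by
    rw [hydef] at h; exact of_decide_eq_false h
  have same : ∀ a1 a2 b1 b2 : ℤ, D (a1, a2) → D (b1, b2) →
      a1 - b1 ≤ 2 → b1 - a1 ≤ 2 → a2 - b2 ≤ 2 → b2 - a2 ≤ 2 →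
      (Cl B₁ (a1, a2) ∧ Cl B₁ (b1, b2)) ∨ (Cl B₂ (a1, a2) ∧ Cl B₂ (b1, b2)) := by
    rintro a1 a2 b1 b2 (ha | ha) (hb | hb) h1 h2 h3 h4
    · exact Or.inl ⟨ha, hb⟩
    · have := sep a1 a2 b1 b2 ha hb; omega
    · have := sep b1 b2 a1 a2 hb ha; omega
    · exact Or.inr ⟨ha, hb⟩
  have hyX : y ∈ XLinear := by
    intro v
    obtain ⟨a, b⟩ := v
    rw [e01, em10, e10]
    refine ⟨?_, ?_, ?_⟩
    · rintro ⟨h1, h2, h3⟩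
      have d1 := yT' _ h1
      have d2 := yT' _ h2
      rcases same a b a (b + 1) d1 d2 (by omega) (by omega) (by omega) (by omega) with
        ⟨c1, c2⟩ | ⟨c1, c2⟩
      · exact yF _ h3 (Or.inl (Cl.left c1 c2))
      · exact yF _ h3 (Or.inr (Cl.left c1 c2))
    · rintro ⟨h1, h2, h3⟩
      have d1 := yT' _ h1
      have d2 := yT' _ h2
      rcases same a b a (b + 1) d1 d2 (by omega) (by omega) (by omega) (by omega) with
        ⟨c1, c2⟩ | ⟨c1, c2⟩
      · exact yF _ h3 (Or.inl (Cl.right c1 c2))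
      · exact yF _ h3 (Or.inr (Cl.right c1 c2))
    · rintro ⟨h1, h2, h3, h4⟩
      have d1 := yT' _ h1
      have d2 := yT' _ h2
      have d3 := yT' _ h3
      rcases same (a - 1) b a b d1 d2 (by omega) (by omega) (by omega) (by omega) with
        ⟨c1, c2⟩ | ⟨c1, c2⟩ <;>
      rcases same a b (a + 1) b d2 d3 (by omega) (by omega) (by omega) (by omega) with
        ⟨c1', c2'⟩ | ⟨c1', c2'⟩
      · exact yF _ h4 (Or.inl (Cl.up c1 c2 c2'))
      · have := sep a b a b c2 c1'; omega
      · have := sep a b a b c1' c2; omega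
      · exact yF _ h4 (Or.inr (Cl.up c1 c2 c2'))
  refine ⟨y, hyX, ?_, ?_⟩
  · -- blockAt y 0 n = q
    funext v
    have hv := congrFun hb₁ v
    simp only [blockAt, zero_add] at hv ⊢
    set z : ℤ × ℤ := (((v.1 : ℕ) : ℤ), ((v.2 : ℕ) : ℤ)) with hz
    have hz1 : 0 ≤ z.1 ∧ z.1 < (n : ℤ) ∧ 0 ≤ z.2 ∧ z.2 < (n : ℤ) := by
      rw [hz]
      dsimp only
      have h1 : ((v.1 : ℕ) : ℤ) < (n : ℤ) := by exact_mod_cast Fin.isLt v.1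
      have h2 : ((v.2 : ℕ) : ℤ) < (n : ℤ) := by exact_mod_cast Fin.isLt v.2
      omega
    cases hqv : q v with
    | true =>
      apply yT
      exact Or.inl (Cl.base (show z ∈ B₁ from ⟨hz1, by rw [hv, hqv]⟩))
    | false =>
      rw [hydef]
      apply decide_eq_false
      rintro (h | h)
      · have hxz : x₁ z = true := cl_le hx₁ (fun b hb => hb.2) z h
        rw [hqv] at hv
        rw [hxz] at hv
        exact Bool.noConfusion hv
      · have hbox := box₂ z h
        omega
  · -- blockAt y u n = p
    funext v
    have hv := congrFun hb₂ v
    simp only [blockAt] at hv ⊢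
    set z : ℤ × ℤ := u + (((v.1 : ℕ) : ℤ), ((v.2 : ℕ) : ℤ)) with hz
    have hz1 : u.1 ≤ z.1 ∧ z.1 < u.1 + (n : ℤ) ∧ u.2 ≤ z.2 ∧ z.2 < u.2 + (n : ℤ) := by
      rw [hz]
      simp only [Prod.fst_add, Prod.snd_add]
      have h1 : ((v.1 : ℕ) : ℤ) < (n : ℤ) := by exact_mod_cast Fin.isLt _
      have h2 : ((v.2 : ℕ) : ℤ) < (n : ℤ) := by exact_mod_cast Fin.isLt _
      have h3 : (0 : ℤ) ≤ ((v.1 : ℕ) : ℤ) := by positivity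
      have h4 : (0 : ℤ) ≤ ((v.2 : ℕ) : ℤ) := by positivity
      omega
    cases hpv : p v with
    | true =>
      apply yT
      exact Or.inr (Cl.base (show z ∈ B₂ from ⟨hz1, by rw [hv, hpv]⟩))
    | false =>
      rw [hydef]
      apply decide_eq_false
      rintro (h | h)
      · have hbox := box₁ z h
        omega
      · have hxz : x₂ z = true := cl_le hx₂ (fun b hb => hb.2) z h
        rw [hpv] at hv
        rw [hxz] at hv
        exact Bool.noConfusion hv

/-- `XLinear` is `(7n)`-block gluing. -/
lemma blockGluing7 : BlockGluing XLinear (fun n => 7 * n) := by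
  intro n hn p hp q hq u hu
  apply glue hn hp hq
  have h : ((7 * n : ℕ) : ℤ) + (n : ℤ) = 8 * (n : ℤ) := by push_cast; ring
  rw [h] at hu
  exact hu

/-- Upward forcing: a full black row of an `XLinear` configuration forces a shrinking
black triangle above it. -/
lemma force {x : Config Bool} (hx : x ∈ XLinear) {j a b : ℤ}
    (hrow : ∀ c : ℤ, a ≤ c → c ≤ b → x (c, j) = true) :
    ∀ k : ℕ, ∀ c : ℤ, a + k ≤ c → c ≤ b - k → x (c, j + k) = true := by
  intro k
  induction k with
  | zero =>
    intro c h1 h2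
    have : x (c, j) = true := hrow c (by push_cast at h1; omega) (by push_cast at h2; omega)
    simpa using this
  | succ k ih =>
    intro c h1 h2
    have hcast : ((k + 1 : ℕ) : ℤ) = (k : ℤ) + 1 := by push_cast; ring
    rw [hcast] at h1 h2
    have hl : x (c - 1, j + k) = true := ih (c - 1) (by omega) (by omega)
    have hm : x (c, j + k) = true := ih c (by omega) (by omega)
    have hr : x (c + 1, j + k) = true := ih (c + 1) (by omega) (by omega)
    have := xl_up hx hl hm hr
    rw [hcast, ← add_assoc]
    exact this

end Stmt18Aux

open Stmt18Aux in
/-- `X_Linear` is linearly block gluing, and sharply so: it is not `f`-block gluing for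
any nondecreasing `f ∈ o(n)`. -/
theorem stmt18 :
    LinearlyBlockGluing XLinear ∧
    ∀ f : ℕ → ℕ, Monotone f →
      (∀ ε : ℝ, 0 < ε → ∃ n₀ : ℕ, ∀ n : ℕ, n₀ ≤ n → (f n : ℝ) ≤ ε * (n : ℝ)) →
      ¬ BlockGluing XLinear f := by
  constructor
  · refine ⟨fun n => 7 * n, ?_, ⟨7, by norm_num, ?_⟩, blockGluing7⟩
    · intro a b hab
      simpa using Nat.mul_le_mul_left 7 hab
    · intro n
      push_cast
      linarith [Nat.cast_nonneg (α := ℝ) n]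
  · intro f hf hfo hBG
    obtain ⟨n₀, hn₀⟩ := hfo (1 / 8) (by norm_num)
    set n : ℕ := n₀ + 8 with hndef
    have h8 : 8 * f n ≤ n := by
      have h1 : (f n : ℝ) ≤ 1 / 8 * n := hn₀ n (by omega)
      by_contra hc
      push_neg at hc
      have h2 : (n : ℝ) < 8 * (f n : ℝ) := by exact_mod_cast (by omega : n < 8 * f n)
      linarith
    have hn1 : 1 ≤ n := by omega
    have hqL : (fun _ => true : Fin n × Fin n → Bool) ∈ Lang XLinear n :=
      ⟨fun _ => true, black_mem, 0, rfl⟩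
    have hpL : (fun _ => false : Fin n × Fin n → Bool) ∈ Lang XLinear n :=
      ⟨fun _ => false, white_mem, 0, rfl⟩
    set u : ℤ × ℤ := ((0 : ℤ), (f n : ℤ) + n) with hudef
    have habs : |(f n : ℤ) + n| = (f n : ℤ) + n := abs_of_nonneg (by positivity)
    have hnorm : (f n : ℤ) + (n : ℤ) ≤ normInf u := by
      rw [hudef]
      unfold normInf
      dsimp only
      rw [habs]
      exact le_max_right _ _
    obtain ⟨x, hx, hq0, hpu⟩ := hBG n hn1 _ hpL _ hqL u hnorm
    have hrowall : ∀ c r : ℤ, 0 ≤ c → c < n → 0 ≤ r → r < n → x (c, r) = true := by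
      intro c r h1 h2 h3 h4
      have hv := congrFun hq0 (⟨c.toNat, by omega⟩, ⟨r.toNat, by omega⟩)
      simp only [blockAt, zero_add] at hv
      rw [show ((c.toNat : ℕ) : ℤ) = c by omega, show ((r.toNat : ℕ) : ℤ) = r by omega] at hv
      exact hv
    have hrow : ∀ c : ℤ, 0 ≤ c → c ≤ (n : ℤ) - 1 → x (c, (n : ℤ) - 1) = true := by
      intro c h1 h2
      exact hrowall c ((n : ℤ) - 1) h1 (by omega) (by omega) (by omega)
    set k : ℕ := f n + 1 with hkdef
    have hk2 : 2 * (k : ℤ) ≤ (n : ℤ) - 1 := by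
      have : (8 : ℤ) * (f n) ≤ (n : ℤ) := by exact_mod_cast h8
      have hn8 : (8 : ℤ) ≤ (n : ℤ) := by exact_mod_cast (by omega : 8 ≤ n)
      push_cast [hkdef]
      omega
    have hx1 : x ((k : ℤ), ((n : ℤ) - 1) + k) = true := by
      refine force hx hrow k (k : ℤ) (by omega) (by omega)
    have hx2 : x ((k : ℤ), ((n : ℤ) - 1) + k) = false := by
      have hkn : k < n := by omega
      have hv := congrFun hpu (⟨k, hkn⟩, ⟨0, by omega⟩)
      simp only [blockAt] at hv
      have he : u + (((k : ℕ) : ℤ), ((0 : ℕ) : ℤ)) = ((k : ℤ), ((n : ℤ) - 1) + k) := by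
        rw [hudef, pt, Prod.mk.injEq]
        constructor
        · ring
        · push_cast [hkdef]
          ring
      rw [he] at hv
      exact hv
    rw [hx1] at hx2
    exact Bool.noConfusion hx2
end
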